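/- arXiv:math/0406250 — 3 statements merged into one kernel-verified Lean document; each statement's English description precedes it below -/
import Mathlib

section
/- For any two skew diagrams I and J, the skew Schur functions satisfy s_I · s_J = s_{I▶J} + s_{I↑J}. -/
noncomputable section

/-- A box in the plane: `(row, column)`, rows increasing downward (English notation). -/
abbrev Box : Type := ℤ × ℤ

/-- The content of a box `(i, j)` is `j - i`. -/
def boxContent (b : Box) : ℤ := b.2 - b.1

/-- An integer partition, indexed from `1` (the value `part 0` is irrelevant). -/
structure Partition' where
  part : ℕ → ℕ
  antitone : ∀ ⦃i j : ℕ⦄, i ≤ j → part j ≤ part i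
  eventually_zero : ∃ N : ℕ, ∀ i : ℕ, N ≤ i → part i = 0

/-- The skew diagram `λ/μ`: boxes `(i, j)` with `i ≥ 1` and `μ_i < j ≤ λ_i`. -/
def skewCells (lam mu : Partition') : Set Box :=
  {b : Box | 1 ≤ b.1 ∧ (mu.part b.1.toNat : ℤ) < b.2 ∧ b.2 ≤ (lam.part b.1.toNat : ℤ)}

/-- `D` is the set of boxes of a skew diagram `λ/μ` for some partitions `μ ⊆ λ`. -/
def IsSkewShape (D : Set Box) : Prop :=
  ∃ lam mu : Partition', (∀ i, mu.part i ≤ lam.part i) ∧ D = skewCells lam mu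

/-- Translate a set of boxes by a vector `v`. -/
def boxTranslate (v : Box) (D : Set Box) : Set Box := (fun b => b + v) '' D

/-- `D` is a translate of a skew diagram. -/
def IsSkewLike (D : Set Box) : Prop := ∃ v : Box, IsSkewShape (boxTranslate v D)

/-- Two boxes share a common edge. -/
def boxAdj (a b : Box) : Prop :=
  (a.1 = b.1 ∧ (a.2 = b.2 + 1 ∨ b.2 = a.2 + 1)) ∨
  (a.2 = b.2 ∧ (a.1 = b.1 + 1 ∨ b.1 = a.1 + 1))

/-- Any two boxes of `D` are joined by a path of boxes of `D` in which consecutive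
boxes share a common edge. -/
def EdgewiseConnected (D : Set Box) : Prop :=
  ∀ a ∈ D, ∀ b ∈ D, Relation.ReflTransGen (fun x y => x ∈ D ∧ y ∈ D ∧ boxAdj x y) a b

/-- `D` contains no `2 × 2` block of boxes. -/
def NoTwoByTwo (D : Set Box) : Prop :=
  ∀ b : Box, ¬(b ∈ D ∧ (b.1, b.2 + 1) ∈ D ∧ (b.1 + 1, b.2) ∈ D ∧ (b.1 + 1, b.2 + 1) ∈ D)

/-- A border strip (ribbon): a nonempty edgewise connected skew diagram (up to translation)
containing no `2 × 2` block of boxes. -/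
def IsBorderStrip (B : Set Box) : Prop :=
  B.Nonempty ∧ IsSkewLike B ∧ EdgewiseConnected B ∧ NoTwoByTwo B

/-- `b` is the starting box (lower-left end) of `B`: no box of `B` directly to its left
nor directly below it. -/
def IsStartBox (B : Set Box) (b : Box) : Prop :=
  b ∈ B ∧ (b.1, b.2 - 1) ∉ B ∧ (b.1 + 1, b.2) ∉ B

/-- `b` is the ending box (upper-right end) of `B`: no box of `B` directly above it
nor directly to its right. -/
def IsEndBox (B : Set Box) (b : Box) : Prop :=
  b ∈ B ∧ (b.1 - 1, b.2) ∉ B ∧ (b.1, b.2 + 1) ∉ B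

/-- The strip `B` has starting box of content `p` and ending box of content `q`. -/
def HasPQ (B : Set Box) (p q : ℤ) : Prop :=
  (∃ b : Box, IsStartBox B b ∧ boxContent b = p) ∧
  (∃ b : Box, IsEndBox B b ∧ boxContent b = q)

/-- An outside decomposition of `D`: a partition of the boxes of `D` into pairwise disjoint
border strips, each strip having its starting box on the left or bottom perimeter of `D` and
its ending box on the right or top perimeter of `D`. -/
def IsOutsideDecomposition (D : Set Box) (P : Set (Set Box)) : Prop :=
  (∀ θ ∈ P, IsBorderStrip θ ∧ θ ⊆ D) ∧
  (∀ b ∈ D, ∃! θ : Set Box, θ ∈ P ∧ b ∈ θ) ∧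
  (∀ θ ∈ P, ∀ b : Box, IsStartBox θ b → ((b.1, b.2 - 1) ∉ D ∨ (b.1 + 1, b.2) ∉ D)) ∧
  (∀ θ ∈ P, ∀ b : Box, IsEndBox θ b → ((b.1 - 1, b.2) ∉ D ∨ (b.1, b.2 + 1) ∉ D))

/-- The box `b` of `D` goes up in the outside decomposition `P`: in the strip of `P`
containing it, the next box is directly above it; an ending box goes up when no box of `D`
lies directly above it. -/
def GoesUp (D : Set Box) (P : Set (Set Box)) (b : Box) : Prop :=
  ∃ θ ∈ P, b ∈ θ ∧ ((b.1 - 1, b.2) ∈ θ ∨ (IsEndBox θ b ∧ (b.1 - 1, b.2) ∉ D))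

/-- The box `b` of `D` goes right in the outside decomposition `P`: in the strip of `P`
containing it, the next box is directly to its right; an ending box goes right when some box
of `D` lies directly above it. -/
def GoesRight (D : Set Box) (P : Set (Set Box)) (b : Box) : Prop :=
  ∃ θ ∈ P, b ∈ θ ∧ ((b.1, b.2 + 1) ∈ θ ∨ (IsEndBox θ b ∧ (b.1 - 1, b.2) ∈ D))

/-- `T` is a cutting strip of the outside decomposition `P` of `D`: a border strip whose
boxes are labeled by the contents of `D` (each content appearing once), in which the box
labeled `c` goes up or goes right according as the boxes of the diagonal of content `c`
of `D` go up or go right in `P`. -/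
def IsCuttingStripOf (D : Set Box) (P : Set (Set Box)) (T : Set Box) : Prop :=
  IsBorderStrip T ∧ boxContent '' T = boxContent '' D ∧
  ∀ b ∈ T, ∀ c ∈ D, boxContent c = boxContent b →
    (((b.1 - 1, b.2) ∈ T → GoesUp D P c) ∧ ((b.1, b.2 + 1) ∈ T → GoesRight D P c))

/-- The segment `φ[p, q]` of a strip `T`: its boxes of content between `p` and `q`. -/
def stripSegment (T : Set Box) (p q : ℤ) : Set Box :=
  {b ∈ T | p ≤ boxContent b ∧ boxContent b ≤ q}

/-- The box of content `c` of the strip `T` goes up (the next box is directly above it). -/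
def StripGoesUpAt (T : Set Box) (c : ℤ) : Prop :=
  ∃ b ∈ T, boxContent b = c ∧ (b.1 - 1, b.2) ∈ T

/-- The box of content `c` of the strip `T` goes right (the next box is directly right of it). -/
def StripGoesRightAt (T : Set Box) (c : ℤ) : Prop :=
  ∃ b ∈ T, boxContent b = c ∧ (b.1, b.2 + 1) ∈ T

/-- `T'` is obtained from the strip `T` by reversing the direction (up versus right) of the
box labeled `i`, keeping the directions of all other boxes. -/
def IsTwist (i : ℤ) (T T' : Set Box) : Prop :=
  boxContent '' T' = boxContent '' T ∧
  (∀ c : ℤ, c ≠ i → (StripGoesUpAt T c ↔ StripGoesUpAt T' c)) ∧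
  (StripGoesUpAt T i ↔ StripGoesRightAt T' i)

/-- The inversion number of an outside decomposition: the number of ordered pairs of
strips `(θ₁, θ₂)` with `p(θ₁) > p(θ₂)` and `q(θ₁) < q(θ₂)`. -/
def invOD (P : Set (Set Box)) : ℕ :=
  {θθ : Set Box × Set Box | θθ.1 ∈ P ∧ θθ.2 ∈ P ∧
    ∃ p₁ q₁ p₂ q₂ : ℤ, HasPQ θθ.1 p₁ q₁ ∧ HasPQ θθ.2 p₂ q₂ ∧ p₂ < p₁ ∧ q₁ < q₂}.ncard

/-- A semistandard Young tableau of shape `D`: entries (variable indices) weakly increase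
along rows and strictly increase down columns; entries outside `D` are normalized to `0`. -/
def IsSSYT (D : Set Box) (T : Box → ℕ) : Prop :=
  (∀ b ∈ D, (b.1, b.2 + 1) ∈ D → T b ≤ T (b.1, b.2 + 1)) ∧
  (∀ b ∈ D, (b.1 + 1, b.2) ∈ D → T b < T (b.1 + 1, b.2)) ∧
  (∀ b : Box, b ∉ D → T b = 0)

/-- The skew Schur function of a skew diagram `D`, as a formal power series in the
variables `x_n` (`n : ℕ`): the coefficient of a monomial `μ` is the number of semistandard
Young tableaux of shape `D` using each variable `n` exactly `μ n` times. -/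
def schur (D : Set Box) : MvPowerSeries ℕ ℤ :=
  fun μ => ({T : Box → ℕ | IsSSYT D T ∧ ∀ n : ℕ, μ n = {b ∈ D | T b = n}.ncard}.ncard : ℤ)

/-- `b` is the upper-right corner box of `D`: the rightmost box of the top row. -/
def IsUpperRightCorner (D : Set Box) (b : Box) : Prop :=
  b ∈ D ∧ (∀ c ∈ D, b.1 ≤ c.1) ∧ ∀ c ∈ D, c.1 = b.1 → c.2 ≤ b.2

/-- `b` is the lower-left corner box of `D`: the leftmost box of the bottom row. -/
def IsLowerLeftCorner (D : Set Box) (b : Box) : Prop :=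
  b ∈ D ∧ (∀ c ∈ D, c.1 ≤ b.1) ∧ ∀ c ∈ D, c.1 = b.1 → b.2 ≤ c.2

/-- The block (edgewise connected component) of `D` containing the box `a`. -/
def blockOf (D : Set Box) (a : Box) : Set Box :=
  {b : Box | Relation.ReflTransGen (fun x y => x ∈ D ∧ y ∈ D ∧ boxAdj x y) a b}

/-- The complete homogeneous symmetric function `h_r` (`h_0 = 1`, `h_r = 0` for `r < 0`):
the sum of all monomials of degree `r`. -/
def hSym (r : ℤ) : MvPowerSeries ℕ ℤ :=
  fun μ => if ((μ.sum fun _ e => e : ℕ) : ℤ) = r then 1 else 0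

/-- The elementary symmetric function `e_r` (`e_0 = 1`, `e_r = 0` for `r < 0`):
the sum of all squarefree monomials of degree `r`. -/
def eSym (r : ℤ) : MvPowerSeries ℕ ℤ :=
  fun μ => if (∀ n ∈ μ.support, μ n = 1) ∧ ((μ.sum fun _ e => e : ℕ) : ℤ) = r then 1 else 0

/-- The `j`-th part (`j ≥ 1`) of the conjugate partition: the number of indices `i ≥ 1`
with `λ_i ≥ j`. -/
def conjPart (lam : Partition') (j : ℕ) : ℕ := {i : ℕ | 1 ≤ i ∧ j ≤ lam.part i}.ncard

/-- The order on the supersymmetric alphabet `x_0 < x_1 < ⋯ < y_0 < y_1 < ⋯`,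
with `Sum.inl n` representing `x_n` and `Sum.inr n` representing `y_n`. -/
def entryLE : ℕ ⊕ ℕ → ℕ ⊕ ℕ → Prop
  | Sum.inl a, Sum.inl b => a ≤ b
  | Sum.inl _, Sum.inr _ => True
  | Sum.inr _, Sum.inl _ => False
  | Sum.inr a, Sum.inr b => a ≤ b

/-- A super tableau of shape `D`: rows and columns weakly increase, the `x`-symbols
strictly increase down columns, the `y`-symbols strictly increase along rows; entries
outside `D` are normalized to `Sum.inl 0`. -/
def IsSuperSSYT (D : Set Box) (T : Box → ℕ ⊕ ℕ) : Prop :=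
  (∀ b ∈ D, (b.1, b.2 + 1) ∈ D → entryLE (T b) (T (b.1, b.2 + 1))) ∧
  (∀ b ∈ D, (b.1 + 1, b.2) ∈ D → entryLE (T b) (T (b.1 + 1, b.2))) ∧
  (∀ b ∈ D, (b.1 + 1, b.2) ∈ D →
    ∀ a c : ℕ, T b = Sum.inl a → T (b.1 + 1, b.2) = Sum.inl c → a < c) ∧
  (∀ b ∈ D, (b.1, b.2 + 1) ∈ D →
    ∀ a c : ℕ, T b = Sum.inr a → T (b.1, b.2 + 1) = Sum.inr c → a < c) ∧
  (∀ b : Box, b ∉ D → T b = Sum.inl 0)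

/-- The supersymmetric skew Schur function `s_D(X, Y)`, as a formal power series in the
variables `x_n, y_n`: the coefficient of a monomial `μ` is the number of super tableaux
of shape `D` using each symbol `v` exactly `μ v` times. -/
def superSchur (D : Set Box) : MvPowerSeries (ℕ ⊕ ℕ) ℤ :=
  fun μ =>
    ({T : Box → ℕ ⊕ ℕ | IsSuperSSYT D T ∧
        ∀ v : ℕ ⊕ ℕ, μ v = {b ∈ D | T b = v}.ncard}.ncard : ℤ)


/-!
Let `c` be the box right of (for `I ▶ J`) or on top of (for `I ↑ J`) the upper-right corner `u`
of `I`, and `K` the translate of `J` whose lower-left corner `l` lands on `c`. A skew shape lies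
weakly south-west of its upper-right corner and weakly north-east of its lower-left corner, so
`u, c` is the only pair of adjacent boxes between `I` and `K`. Hence a semistandard tableau of
`I ∪ K` is a pair of tableaux `T₁` of `I` and `T₂` of `J` subject to a single extra inequality:
the row condition `T₁ u ≤ T₂ l` for `I ▶ J`, the column condition `T₂ l < T₁ u` for `I ↑ J`.
These are complementary, and all pairs with total content `μ` are counted by the coefficient of
`x^μ` in `s_I s_J`.
-/

open Finset.HasAntidiagonal

theorem mem_boxTranslate {v b : Box} {D : Set Box} : b ∈ boxTranslate v D ↔ b - v ∈ D := by
  simp [boxTranslate, sub_eq_add_neg]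

theorem self_mem_boxTranslate_sub {c l : Box} {D : Set Box} :
    c ∈ boxTranslate (c - l) D ↔ l ∈ D := by
  rw [mem_boxTranslate, sub_sub_cancel]

theorem IsSkewShape.finite {D : Set Box} (hD : IsSkewShape D) : D.Finite := by
  obtain ⟨lam, mu, -, rfl⟩ := hD
  obtain ⟨N, hN⟩ := lam.eventually_zero
  refine ((Set.finite_Icc (1 : ℤ) N).prod (Set.finite_Icc (1 : ℤ) (lam.part 0))).subset ?_
  rintro ⟨i, j⟩ ⟨hi, hmu, hlam⟩
  dsimp only at hi hmu hlam
  have hrow : i.toNat < N := by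
    by_contra! h
    rw [hN _ h] at hlam
    omega
  have hcol : lam.part i.toNat ≤ lam.part 0 := lam.antitone (Nat.zero_le _)
  simp only [Set.mem_prod, Set.mem_Icc]
  omega

theorem IsUpperRightCorner.le_fst_and_snd_le {I : Set Box} {u : Box} (hI : IsSkewShape I)
    (hu : IsUpperRightCorner I u) : ∀ b ∈ I, u.1 ≤ b.1 ∧ b.2 ≤ u.2 := by
  obtain ⟨lam, mu, -, rfl⟩ := hI
  obtain ⟨⟨hu1, hmu, hlam⟩, htop, hright⟩ := hu
  intro b hb
  have hub := htop b hb
  refine ⟨hub, ?_⟩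
  have hend : ((u.1, (lam.part u.1.toNat : ℤ)) : Box) ∈ skewCells lam mu :=
    ⟨hu1, hmu.trans_le hlam, le_rfl⟩
  have hend_le := hright _ hend rfl
  have hmono : lam.part b.1.toNat ≤ lam.part u.1.toNat := lam.antitone (by omega)
  have := hb.2.2
  omega

theorem IsLowerLeftCorner.fst_le_and_le_snd {J : Set Box} {l : Box} (hJ : IsSkewShape J)
    (hl : IsLowerLeftCorner J l) : ∀ b ∈ J, b.1 ≤ l.1 ∧ l.2 ≤ b.2 := by
  obtain ⟨lam, mu, -, rfl⟩ := hJ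
  obtain ⟨⟨hl1, hmu, hlam⟩, hbot, hleft⟩ := hl
  intro b hb
  have hbl := hbot b hb
  refine ⟨hbl, ?_⟩
  have hstart : ((l.1, (mu.part l.1.toNat : ℤ) + 1) : Box) ∈ skewCells lam mu :=
    ⟨hl1, lt_add_one _, by dsimp only; omega⟩
  have hstart_le := hleft _ hstart rfl
  have hmono : mu.part l.1.toNat ≤ mu.part b.1.toNat := mu.antitone (by have := hb.1; omega)
  have := hb.2.1
  omega

def IsSSYTAcross (D E : Set Box) (T : Box → ℕ) : Prop :=
  (∀ b ∈ D, (b.1, b.2 + 1) ∈ E → T b ≤ T (b.1, b.2 + 1)) ∧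
  (∀ b ∈ D, (b.1 + 1, b.2) ∈ E → T b < T (b.1 + 1, b.2))

section IsSSYTAcross

variable {D D' E E' : Set Box} {T T' : Box → ℕ}

theorem isSSYT_iff : IsSSYT D T ↔ IsSSYTAcross D D T ∧ ∀ b ∉ D, T b = 0 :=
  and_assoc.symm

theorem IsSSYTAcross.mono (h : IsSSYTAcross D' E' T) (hD : D ⊆ D') (hE : E ⊆ E') :
    IsSSYTAcross D E T :=
  ⟨fun b hb hr => h.1 b (hD hb) (hE hr), fun b hb hd => h.2 b (hD hb) (hE hd)⟩

theorem isSSYTAcross_union_left :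
    IsSSYTAcross (D ∪ D') E T ↔ IsSSYTAcross D E T ∧ IsSSYTAcross D' E T := by
  simp only [IsSSYTAcross, Set.mem_union, or_imp, forall_and]
  tauto

theorem isSSYTAcross_union_right :
    IsSSYTAcross D (E ∪ E') T ↔ IsSSYTAcross D E T ∧ IsSSYTAcross D E' T := by
  simp only [IsSSYTAcross, Set.mem_union, or_imp, forall_and]
  tauto

theorem isSSYTAcross_congr (hD : ∀ b ∈ D, T b = T' b) (hE : ∀ b ∈ E, T b = T' b) :
    IsSSYTAcross D E T ↔ IsSSYTAcross D E T' := by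
  unfold IsSSYTAcross
  refine and_congr (forall₂_congr fun b hb => ?_) (forall₂_congr fun b hb => ?_) <;>
    exact imp_congr_right fun h => by rw [hD b hb, hE _ h]

theorem isSSYTAcross_boxTranslate {v : Box} :
    IsSSYTAcross (boxTranslate v D) (boxTranslate v E) T ↔
      IsSSYTAcross D E (fun b => T (b + v)) := by
  have hright (b : Box) : ((b + v).1, (b + v).2 + 1) = ((b.1, b.2 + 1) : Box) + v := by
    ext <;> simp only [Prod.fst_add, Prod.snd_add]; ring
  have hdown (b : Box) : ((b + v).1 + 1, (b + v).2) = ((b.1 + 1, b.2) : Box) + v := by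
    ext <;> simp only [Prod.fst_add, Prod.snd_add]; ring
  simp only [IsSSYTAcross, boxTranslate, Set.forall_mem_image, hright, hdown,
    (add_left_injective v).mem_set_image]

end IsSSYTAcross

def entryCount (D : Set Box) (T : Box → ℕ) (n : ℕ) : ℕ := {b ∈ D | T b = n}.ncard

def tableaux (D : Set Box) (μ : ℕ →₀ ℕ) : Set (Box → ℕ) :=
  {T | IsSSYT D T ∧ ∀ n, μ n = entryCount D T n}

theorem coeff_schur (D : Set Box) (μ : ℕ →₀ ℕ) :
    MvPowerSeries.coeff μ (schur D) = (tableaux D μ).ncard := rfl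

section entryCount

variable {D E : Set Box} {T T' : Box → ℕ}

theorem entryCount_congr (h : ∀ b ∈ D, T b = T' b) : entryCount D T = entryCount D T' := by
  ext n
  rw [entryCount, entryCount, Set.sep_ext_iff.2 fun b hb => by rw [h b hb]]

theorem entryCount_union (hD : D.Finite) (hE : E.Finite) (hDE : Disjoint D E) (n : ℕ) :
    entryCount (D ∪ E) T n = entryCount D T n + entryCount E T n :=
  (congrArg Set.ncard Set.sep_union).trans <|
    Set.ncard_union_eq (hDE.mono (Set.sep_subset _ _) (Set.sep_subset _ _)) (hD.sep _) (hE.sep _)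

theorem entryCount_boxTranslate (v : Box) :
    entryCount (boxTranslate v D) T = entryCount D (fun b => T (b + v)) := by
  ext n
  rw [entryCount, entryCount,
    ← Set.ncard_image_of_injective {b ∈ D | T (b + v) = n} (add_left_injective v)]
  congr 1
  ext b
  simp [mem_boxTranslate, sub_eq_add_neg]

theorem exists_finsupp_eq_entryCount (hD : D.Finite) (T : Box → ℕ) :
    ∃ q : ℕ →₀ ℕ, ⇑q = entryCount D T := by
  refine ⟨Finsupp.ofSupportFinite _ ((hD.image T).subset fun n hn => ?_), rfl⟩
  obtain ⟨b, hb, rfl⟩ := Set.nonempty_of_ncard_ne_zero hn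
  exact ⟨b, hb, rfl⟩

end entryCount

section tableaux

variable {D : Set Box} {T : Box → ℕ}

theorem tableaux_finite (hD : D.Finite) (μ : ℕ →₀ ℕ) : (tableaux D μ).Finite := by
  have : Finite D := hD
  refine Set.Finite.of_finite_image (f := fun T (b : D) => T b) ?_ fun T hT T' hT' h => ?_
  · refine (Set.Finite.pi (t := fun _ : D => (μ.support : Set ℕ))
      fun _ => μ.support.finite_toSet).subset ?_
    rintro _ ⟨T, ⟨-, hcount⟩, rfl⟩ b -
    rw [Finset.mem_coe, Finsupp.mem_support_iff, hcount]
    exact ((Set.ncard_pos (hD.sep fun c => T c = T b)).2 ⟨b, b.2, rfl⟩).ne'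
  · funext b
    by_cases hb : b ∈ D
    · exact congrFun h ⟨b, hb⟩
    · rw [hT.1.2.2 b hb, hT'.1.2.2 b hb]

theorem disjoint_tableaux {q q' : ℕ →₀ ℕ} (h : q ≠ q') :
    Disjoint (tableaux D q) (tableaux D q') :=
  Set.disjoint_left.2 fun _ hT hT' => h (Finsupp.ext fun n => (hT.2 n).trans (hT'.2 n).symm)

theorem isSSYT_boxTranslate {v : Box} :
    IsSSYT (boxTranslate v D) T ↔ IsSSYT D (fun b => T (b + v)) := by
  rw [isSSYT_iff, isSSYT_iff, isSSYTAcross_boxTranslate,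
    ← (Equiv.addRight v).forall_congr_right]
  simp only [Equiv.coe_addRight, boxTranslate, (add_left_injective v).mem_set_image]

theorem tableaux_boxTranslate (v : Box) (μ : ℕ →₀ ℕ) :
    tableaux (boxTranslate v D) μ = (fun T b => T (b - v)) '' tableaux D μ := by
  have hmem (T : Box → ℕ) :
      T ∈ tableaux (boxTranslate v D) μ ↔ (fun b => T (b + v)) ∈ tableaux D μ := by
    simp only [tableaux, Set.mem_ofPred_eq, isSSYT_boxTranslate, entryCount_boxTranslate]
  ext T
  refine ⟨fun hT => ⟨_, (hmem T).1 hT, by simp⟩, ?_⟩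
  rintro ⟨T, hT, rfl⟩
  exact (hmem _).2 (by simpa using hT)

end tableaux

def tableauPairs (D E : Set Box) (μ : ℕ →₀ ℕ) : Set ((Box → ℕ) × (Box → ℕ)) :=
  ⋃ q ∈ antidiagonal μ, tableaux D q.1 ×ˢ tableaux E q.2

section tableauPairs

variable {D E : Set Box}

theorem tableauPairs_finite (hD : D.Finite) (hE : E.Finite) (μ : ℕ →₀ ℕ) :
    (tableauPairs D E μ).Finite :=
  (antidiagonal μ).finite_toSet.biUnion fun q _ =>
    (tableaux_finite hD q.1).prod (tableaux_finite hE q.2)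

theorem coeff_schur_mul (hD : D.Finite) (hE : E.Finite) (μ : ℕ →₀ ℕ) :
    MvPowerSeries.coeff μ (schur D * schur E) = (tableauPairs D E μ).ncard := by
  classical
  have hdisj : (antidiagonal μ : Set (_ × _)).PairwiseDisjoint
      fun q => tableaux D q.1 ×ˢ tableaux E q.2 := by
    intro q _ q' _ hne
    by_cases h : q.1 = q'.1
    · exact Set.disjoint_prod.2 (.inr (disjoint_tableaux fun h' => hne (Prod.ext h h')))
    · exact Set.disjoint_prod.2 (.inl (disjoint_tableaux h))
  rw [MvPowerSeries.coeff_mul, tableauPairs, ← Finset.set_biUnion_coe,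
    (antidiagonal μ).finite_toSet.ncard_biUnion
      (fun q _ => (tableaux_finite hD q.1).prod (tableaux_finite hE q.2)) hdisj,
    finsum_mem_coe_finset]
  push_cast [Set.ncard_prod, coeff_schur]
  rfl

theorem tableauPairs_boxTranslate (v : Box) (μ : ℕ →₀ ℕ) :
    tableauPairs D (boxTranslate v E) μ =
      Prod.map id (fun T b => T (b - v)) '' tableauPairs D E μ := by
  simp only [tableauPairs, Set.image_iUnion₂, Set.prodMap_image_prod, Set.image_id,
    tableaux_boxTranslate]

end tableauPairs

section union

variable {D E : Set Box} {T T₁ T₂ : Box → ℕ} {μ : ℕ →₀ ℕ}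

theorem IsSSYT.indicator {F : Set Box} (hT : IsSSYT F T) (hDF : D ⊆ F) :
    IsSSYT D (D.indicator T) := by
  refine isSSYT_iff.2 ⟨?_, fun b hb => Set.indicator_of_notMem hb T⟩
  have hagree : ∀ b ∈ D, D.indicator T b = T b := fun b hb => Set.indicator_of_mem hb T
  exact (isSSYTAcross_congr hagree hagree).2 ((isSSYT_iff.1 hT).1.mono hDF hDF)

theorem eqOn_add_left (hDE : Disjoint D E) (h₂ : IsSSYT E T₂) : Set.EqOn (T₁ + T₂) T₁ D :=
  fun b hb => by simp [h₂.2.2 b (Set.disjoint_left.1 hDE hb)]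

theorem eqOn_add_right (hDE : Disjoint D E) (h₁ : IsSSYT D T₁) : Set.EqOn (T₁ + T₂) T₂ E :=
  add_comm T₁ T₂ ▸ eqOn_add_left hDE.symm h₁

theorem indicator_add_eq_left (hDE : Disjoint D E) (h₁ : IsSSYT D T₁) (h₂ : IsSSYT E T₂) :
    D.indicator (T₁ + T₂) = T₁ := by
  funext b
  by_cases hb : b ∈ D
  · rw [Set.indicator_of_mem hb, eqOn_add_left hDE h₂ hb]
  · rw [Set.indicator_of_notMem hb, h₁.2.2 b hb]

theorem IsSSYT.indicator_add_indicator (hT : IsSSYT (D ∪ E) T) (hDE : Disjoint D E) :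
    D.indicator T + E.indicator T = T :=
  (Set.indicator_union_of_disjoint hDE T).symm.trans
    (Set.indicator_eq_self.2 fun b hb => by_contra fun h => hb (hT.2.2 b h))

theorem isSSYT_union_add_iff (hDE : Disjoint D E) (h₁ : IsSSYT D T₁) (h₂ : IsSSYT E T₂) :
    IsSSYT (D ∪ E) (T₁ + T₂) ↔
      IsSSYTAcross D E (T₁ + T₂) ∧ IsSSYTAcross E D (T₁ + T₂) := by
  have hD := eqOn_add_left (T₁ := T₁) hDE h₂
  have hE := eqOn_add_right (T₂ := T₂) hDE h₁
  have hDD := (isSSYTAcross_congr hD hD).2 (isSSYT_iff.1 h₁).1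
  have hEE := (isSSYTAcross_congr hE hE).2 (isSSYT_iff.1 h₂).1
  have hzero : ∀ b ∉ D ∪ E, (T₁ + T₂) b = 0 := fun b hb => by
    simp only [Set.mem_union, not_or] at hb
    simp [h₁.2.2 b hb.1, h₂.2.2 b hb.2]
  rw [isSSYT_iff, isSSYTAcross_union_left, isSSYTAcross_union_right, isSSYTAcross_union_right]
  tauto

theorem entryCount_union_add (hD : D.Finite) (hE : E.Finite) (hDE : Disjoint D E)
    (h₁ : IsSSYT D T₁) (h₂ : IsSSYT E T₂) (n : ℕ) :
    entryCount (D ∪ E) (T₁ + T₂) n = entryCount D T₁ n + entryCount E T₂ n := by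
  rw [entryCount_union hD hE hDE, entryCount_congr (eqOn_add_left hDE h₂),
    entryCount_congr (eqOn_add_right hDE h₁)]

theorem mem_tableauPairs {p : (Box → ℕ) × (Box → ℕ)} :
    p ∈ tableauPairs D E μ ↔ ∃ q ∈ antidiagonal μ, p.1 ∈ tableaux D q.1 ∧ p.2 ∈ tableaux E q.2 := by
  simp only [tableauPairs, Set.mem_iUnion₂, Set.mem_prod, exists_prop]

theorem indicator_mem_tableauPairs (hD : D.Finite) (hE : E.Finite) (hDE : Disjoint D E)
    (hT : T ∈ tableaux (D ∪ E) μ) : (D.indicator T, E.indicator T) ∈ tableauPairs D E μ := by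
  have hcountD := entryCount_congr fun b hb => Set.indicator_of_mem (s := D) hb T
  have hcountE := entryCount_congr fun b hb => Set.indicator_of_mem (s := E) hb T
  obtain ⟨q₁, hq₁⟩ := exists_finsupp_eq_entryCount hD (D.indicator T)
  obtain ⟨q₂, hq₂⟩ := exists_finsupp_eq_entryCount hE (E.indicator T)
  refine mem_tableauPairs.2 ⟨(q₁, q₂), ?_, ⟨hT.1.indicator Set.subset_union_left, by simp [hq₁]⟩,
    ⟨hT.1.indicator Set.subset_union_right, by simp [hq₂]⟩⟩
  rw [mem_antidiagonal]
  ext n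
  rw [Finsupp.add_apply, hq₁, hq₂, hcountD, hcountE, hT.2, entryCount_union hD hE hDE]

theorem injOn_add_tableauPairs (hDE : Disjoint D E) :
    Set.InjOn (fun p => p.1 + p.2) (tableauPairs D E μ) := by
  intro p hp p' hp' h
  obtain ⟨q, -, h₁, h₂⟩ := mem_tableauPairs.1 hp
  obtain ⟨q', -, h₁', h₂'⟩ := mem_tableauPairs.1 hp'
  refine Prod.ext ?_ ?_
  · rw [← indicator_add_eq_left hDE h₁.1 h₂.1, ← indicator_add_eq_left hDE h₁'.1 h₂'.1]
    exact congrArg D.indicator h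
  · rw [← indicator_add_eq_left hDE.symm h₂.1 h₁.1, ← indicator_add_eq_left hDE.symm h₂'.1 h₁'.1,
      add_comm, add_comm p'.2]
    exact congrArg E.indicator h

theorem tableaux_union (hD : D.Finite) (hE : E.Finite) (hDE : Disjoint D E) (μ : ℕ →₀ ℕ) :
    tableaux (D ∪ E) μ = (fun p => p.1 + p.2) ''
      {p ∈ tableauPairs D E μ | IsSSYTAcross D E (p.1 + p.2) ∧ IsSSYTAcross E D (p.1 + p.2)} := by
  ext T
  constructor
  · intro hT
    have hsum := hT.1.indicator_add_indicator hDE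
    refine ⟨_, ⟨indicator_mem_tableauPairs hD hE hDE hT, ?_⟩, hsum⟩
    exact (isSSYT_union_add_iff hDE (hT.1.indicator Set.subset_union_left)
      (hT.1.indicator Set.subset_union_right)).1 (hsum.symm ▸ hT.1)
  · rintro ⟨p, ⟨hp, hacross⟩, rfl⟩
    obtain ⟨q, hq, ⟨h₁, hcount₁⟩, ⟨h₂, hcount₂⟩⟩ := mem_tableauPairs.1 hp
    refine ⟨(isSSYT_union_add_iff hDE h₁ h₂).2 hacross, fun n => ?_⟩
    rw [entryCount_union_add hD hE hDE h₁ h₂, ← mem_antidiagonal.1 hq, Finsupp.add_apply,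
      hcount₁, hcount₂]

theorem coeff_schur_union (hD : D.Finite) (hE : E.Finite) (hDE : Disjoint D E) (μ : ℕ →₀ ℕ) :
    MvPowerSeries.coeff μ (schur (D ∪ E)) =
      {p ∈ tableauPairs D E μ |
        IsSSYTAcross D E (p.1 + p.2) ∧ IsSSYTAcross E D (p.1 + p.2)}.ncard := by
  rw [coeff_schur, tableaux_union hD hE hDE,
    ((injOn_add_tableauPairs hDE).mono (Set.sep_subset _ _)).ncard_image]

end union

theorem coeff_schur_union_boxTranslate {D E : Set Box} (hD : D.Finite) (hE : E.Finite) {v : Box}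
    (hDE : Disjoint D (boxTranslate v E)) (μ : ℕ →₀ ℕ) :
    MvPowerSeries.coeff μ (schur (D ∪ boxTranslate v E)) =
      {p ∈ tableauPairs D E μ |
        IsSSYTAcross D (boxTranslate v E) (p.1 + fun b => p.2 (b - v)) ∧
          IsSSYTAcross (boxTranslate v E) D (p.1 + fun b => p.2 (b - v))}.ncard := by
  have hinj : Function.Injective
      (Prod.map (id : (Box → ℕ) → _) fun (T : Box → ℕ) b => T (b - v)) :=
    Function.injective_id.prodMap fun T T' h => funext fun b => by
      simpa using congrFun h (b + v)
  rw [coeff_schur_union hD (E := boxTranslate v E) (hE.image _) hDE, tableauPairs_boxTranslate]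
  conv_rhs => rw [← Set.ncard_image_of_injective _ hinj]
  exact congrArg (fun s => (Set.ncard s : ℤ)) (Set.image_inter_preimage _ _ _).symm

section glue

variable {I K : Set Box} {u : Box} {T : Box → ℕ}

theorem isSSYTAcross_glue_right_iff (hIu : ∀ b ∈ I, u.1 ≤ b.1 ∧ b.2 ≤ u.2)
    (hK : ∀ b ∈ K, b.1 ≤ u.1 ∧ u.2 + 1 ≤ b.2) (hu : u ∈ I) (hc : (u.1, u.2 + 1) ∈ K) :
    IsSSYTAcross I K T ∧ IsSSYTAcross K I T ↔ T u ≤ T (u.1, u.2 + 1) := by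
  refine ⟨fun h => h.1.1 u hu hc, fun h => ⟨⟨fun b hb hr => ?_, fun b hb hd => ?_⟩,
    ⟨fun b hb hr => ?_, fun b hb hd => ?_⟩⟩⟩
  · obtain ⟨hb₁, hb₂⟩ := hIu b hb
    obtain ⟨hr₁, hr₂⟩ := hK _ hr
    obtain rfl : b = u := Prod.ext (by omega) (by dsimp only at hr₂; omega)
    exact h
  · have := hIu b hb; have := hK _ hd; dsimp only at *; omega
  · have := hK b hb; have := hIu _ hr; dsimp only at *; omega
  · have := hK b hb; have := hIu _ hd; dsimp only at *; omega

theorem isSSYTAcross_glue_up_iff (hIu : ∀ b ∈ I, u.1 ≤ b.1 ∧ b.2 ≤ u.2)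
    (hK : ∀ b ∈ K, b.1 ≤ u.1 - 1 ∧ u.2 ≤ b.2) (hu : u ∈ I) (hc : (u.1 - 1, u.2) ∈ K) :
    IsSSYTAcross I K T ∧ IsSSYTAcross K I T ↔ T (u.1 - 1, u.2) < T u := by
  refine ⟨fun h => ?_, fun h => ⟨⟨fun b hb hr => ?_, fun b hb hd => ?_⟩,
    ⟨fun b hb hr => ?_, fun b hb hd => ?_⟩⟩⟩
  · simpa only [sub_add_cancel] using h.2.2 _ hc (by simpa only [sub_add_cancel] using hu)
  · have := hIu b hb; have := hK _ hr; dsimp only at *; omega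
  · have := hIu b hb; have := hK _ hd; dsimp only at *; omega
  · have := hK b hb; have := hIu _ hr; dsimp only at *; omega
  · obtain ⟨hb₁, hb₂⟩ := hK b hb
    obtain ⟨hd₁, hd₂⟩ := hIu _ hd
    dsimp only at hd₁ hd₂
    obtain rfl : b = (u.1 - 1, u.2) := Prod.ext (by omega) (by omega)
    simpa only [sub_add_cancel] using h

end glue

section quadrants

variable {I J : Set Box} {u c l : Box}

theorem fst_le_and_le_snd_of_mem_boxTranslate_sub (hJl : ∀ b ∈ J, b.1 ≤ l.1 ∧ l.2 ≤ b.2) :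
    ∀ b ∈ boxTranslate (c - l) J, b.1 ≤ c.1 ∧ c.2 ≤ b.2 := fun b hb => by
  have := hJl _ (mem_boxTranslate.1 hb)
  simp only [Prod.fst_sub, Prod.snd_sub] at this
  omega

theorem disjoint_boxTranslate_sub (hIu : ∀ b ∈ I, u.1 ≤ b.1 ∧ b.2 ≤ u.2)
    (hJl : ∀ b ∈ J, b.1 ≤ l.1 ∧ l.2 ≤ b.2) (hc : u.2 < c.2 ∨ c.1 < u.1) :
    Disjoint I (boxTranslate (c - l) J) := Set.disjoint_left.2 fun b hbI hbK => by
  have := hIu b hbI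
  have := fst_le_and_le_snd_of_mem_boxTranslate_sub hJl b hbK
  omega

theorem coeff_schur_union_boxTranslate_sub {R : ℕ → ℕ → Prop} (hI : I.Finite) (hJ : J.Finite)
    (hu : u ∈ I) (hl : l ∈ J) (hIK : Disjoint I (boxTranslate (c - l) J))
    (hR : ∀ T, IsSSYTAcross I (boxTranslate (c - l) J) T ∧
      IsSSYTAcross (boxTranslate (c - l) J) I T ↔ R (T u) (T c)) (μ : ℕ →₀ ℕ) :
    MvPowerSeries.coeff μ (schur (I ∪ boxTranslate (c - l) J)) =
      {p ∈ tableauPairs I J μ | R (p.1 u) (p.2 l)}.ncard := by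
  have hcK : c ∈ boxTranslate (c - l) J := self_mem_boxTranslate_sub.2 hl
  have huJ : u - (c - l) ∉ J := fun h => Set.disjoint_left.1 hIK hu (mem_boxTranslate.2 h)
  have hcI : c ∉ I := fun h => Set.disjoint_left.1 hIK h hcK
  rw [coeff_schur_union_boxTranslate hI hJ hIK]
  refine congrArg (fun s => (Set.ncard s : ℤ)) (Set.sep_ext_iff.2 fun p hp => ?_)
  obtain ⟨q, -, ⟨h₁, -⟩, ⟨h₂, -⟩⟩ := mem_tableauPairs.1 hp
  rw [hR]
  simp [h₁.2.2 c hcI, h₂.2.2 _ huJ]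

end quadrants

theorem schur_mul_eq_glue_general
    (I J : Set Box) (hI : IsSkewShape I) (hJ : IsSkewShape J)
    (u l : Box) (hu : IsUpperRightCorner I u) (hl : IsLowerLeftCorner J l) :
    schur I * schur J =
      schur (I ∪ boxTranslate (u.1 - l.1, u.2 + 1 - l.2) J) +
      schur (I ∪ boxTranslate (u.1 - 1 - l.1, u.2 - l.2) J) := by
  have hIu := hu.le_fst_and_snd_le hI
  have hJl := hl.fst_le_and_le_snd hJ
  have hright : ((u.1 - l.1, u.2 + 1 - l.2) : Box) = (u.1, u.2 + 1) - l := rfl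
  have hup : ((u.1 - 1 - l.1, u.2 - l.2) : Box) = (u.1 - 1, u.2) - l := rfl
  refine MvPowerSeries.ext fun μ => ?_
  rw [coeff_schur_mul hI.finite hJ.finite, map_add, hright, hup,
    coeff_schur_union_boxTranslate_sub (R := (· ≤ ·)) hI.finite hJ.finite hu.1 hl.1
      (disjoint_boxTranslate_sub hIu hJl (.inl (lt_add_one _)))
      (fun T => isSSYTAcross_glue_right_iff hIu
        (fst_le_and_le_snd_of_mem_boxTranslate_sub hJl) hu.1
        (self_mem_boxTranslate_sub.2 hl.1)),
    coeff_schur_union_boxTranslate_sub (R := fun a b => b < a) hI.finite hJ.finite hu.1 hl.1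
      (disjoint_boxTranslate_sub hIu hJl (.inr (sub_one_lt _)))
      (fun T => isSSYTAcross_glue_up_iff hIu
        (fst_le_and_le_snd_of_mem_boxTranslate_sub hJl) hu.1
        (self_mem_boxTranslate_sub.2 hl.1)),
    ← Set.ncard_inter_add_ncard_sdiff_eq_ncard _ {p | p.1 u ≤ p.2 l}
      (tableauPairs_finite hI.finite hJ.finite μ)]
  simp only [Set.sdiff_eq, Set.compl_ofPred, not_le, Nat.cast_add]
  rfl

/-- **Zelevinsky's product rule.** For skew diagrams `I` and `J`,
`s_I · s_J = s_{I▶J} + s_{I↑J}`, where `I▶J` glues the lower-left corner box of `J`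
directly to the right of the upper-right corner box of `I`, and `I↑J` glues it directly on
top of that box. -/
theorem schur_mul_eq_glue
    (I J : Set Box) (hI : IsSkewShape I) (hJ : IsSkewShape J)
    (hIne : I.Nonempty) (hJne : J.Nonempty)
    (u l : Box) (hu : IsUpperRightCorner I u) (hl : IsLowerLeftCorner J l) :
    schur I * schur J =
      schur (I ∪ boxTranslate (u.1 - l.1, u.2 + 1 - l.2) J) +
      schur (I ∪ boxTranslate (u.1 - 1 - l.1, u.2 - l.2) J) :=
  schur_mul_eq_glue_general I J hI hJ u l hu hl
end
end

section
/- Let m ≥ 0 and let P = ((a_1,b_1), (a_2,b_2), …, (a_m,b_m)) be a sequence of pairs of integers such that a_1, …, a_m are pairwise distinct and b_1, …, b_m are pairwise distinct. Then for any permutation σ of {1, 2, …, m}, inv(((a_{σ(1)},b_1), (a_{σ(2)},b_2), …, (a_{σ(m)},b_m))) ≡ inv(σ) + inv(P) (mod 2), where inv(σ) denotes the number of inversions of the permutation σ. -/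
noncomputable section

open Finset in
/-- The mod-2 inversion count of an injective sequence. -/
private noncomputable def Gs {m : ℕ} (f : Fin m → ℤ) : ZMod 2 :=
  ∑ p ∈ Finset.univ.filter (fun p : Fin m × Fin m => p.1 < p.2),
    (if f p.2 < f p.1 then (1 : ZMod 2) else 0)

open Finset in
private lemma key_cross {m : ℕ} (f g : Fin m → ℤ) (hf : Function.Injective f)
    (hg : Function.Injective g) :
    (({st : Fin m × Fin m | f st.2 < f st.1 ∧ g st.1 < g st.2}.ncard : ZMod 2))
      = Gs f + Gs g := by
  classical
  have hcard : {st : Fin m × Fin m | f st.2 < f st.1 ∧ g st.1 < g st.2}.ncard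
      = (Finset.univ.filter
          (fun p : Fin m × Fin m => f p.2 < f p.1 ∧ g p.1 < g p.2)).card := by
    rw [Set.ncard_eq_toFinset_card']
    congr 1
    ext p
    simp
  set F : Fin m × Fin m → ZMod 2 :=
    fun p => if f p.2 < f p.1 ∧ g p.1 < g p.2 then 1 else 0 with hF
  have hcast : (({st : Fin m × Fin m | f st.2 < f st.1 ∧ g st.1 < g st.2}.ncard : ZMod 2))
      = ∑ p : Fin m × Fin m, F p := by
    rw [hcard, Finset.card_filter]
    push_cast
    rfl
  rw [hcast]
  have hsplit : ∑ p : Fin m × Fin m, F p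
      = (∑ p ∈ Finset.univ.filter (fun p : Fin m × Fin m => p.1 < p.2), F p)
        + ∑ p ∈ Finset.univ.filter (fun p : Fin m × Fin m => ¬ p.1 < p.2), F p := by
    rw [Finset.sum_filter_add_sum_filter_not]
  have hdiag : ∑ p ∈ Finset.univ.filter (fun p : Fin m × Fin m => ¬ p.1 < p.2), F p
      = ∑ p ∈ Finset.univ.filter (fun p : Fin m × Fin m => p.2 < p.1), F p := by
    refine (Finset.sum_subset ?_ ?_).symm
    · intro p hp
      simp only [Finset.mem_filter, Finset.mem_univ, true_and] at hp ⊢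
      exact asymm hp
    · intro p hp hnp
      simp only [Finset.mem_filter, Finset.mem_univ, true_and] at hp hnp
      have heq : p.1 = p.2 := le_antisymm (not_lt.mp hnp) (not_lt.mp hp)
      simp [hF, heq, lt_irrefl]
  have hswap : ∑ p ∈ Finset.univ.filter (fun p : Fin m × Fin m => p.2 < p.1), F p
      = ∑ p ∈ Finset.univ.filter (fun p : Fin m × Fin m => p.1 < p.2), F p.swap := by
    refine Finset.sum_nbij' (fun p => p.swap) (fun p => p.swap) ?_ ?_ ?_ ?_ ?_ <;>
      intro p hp <;> simp_all [Prod.swap]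
  rw [hsplit, hdiag, hswap, ← Finset.sum_add_distrib]
  have hpt : ∀ p ∈ Finset.univ.filter (fun p : Fin m × Fin m => p.1 < p.2),
      F p + F p.swap
        = (if f p.2 < f p.1 then (1 : ZMod 2) else 0)
          + (if g p.2 < g p.1 then (1 : ZMod 2) else 0) := by
    intro p hp
    simp only [Finset.mem_filter, Finset.mem_univ, true_and] at hp
    have hne : p.1 ≠ p.2 := ne_of_lt hp
    have hfne : f p.1 ≠ f p.2 := fun h => hne (hf h)
    have hgne : g p.1 ≠ g p.2 := fun h => hne (hg h)
    by_cases h1 : f p.2 < f p.1 <;> by_cases h2 : g p.2 < g p.1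
    · have h2' : ¬ g p.1 < g p.2 := asymm h2
      have h1' : ¬ f p.1 < f p.2 := asymm h1
      simp [hF, Prod.swap, h1, h2, h1', h2']
      decide
    · have h2' : g p.1 < g p.2 := lt_of_le_of_ne (not_lt.mp h2) hgne
      have h1' : ¬ f p.1 < f p.2 := asymm h1
      simp [hF, Prod.swap, h1, h2, h1', h2']
    · have h1' : f p.1 < f p.2 := lt_of_le_of_ne (not_lt.mp h1) hfne
      simp [hF, Prod.swap, h1, h2, h1']
    · have h1' : f p.1 < f p.2 := lt_of_le_of_ne (not_lt.mp h1) hfne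
      have h2' : g p.1 < g p.2 := lt_of_le_of_ne (not_lt.mp h2) hgne
      simp [hF, Prod.swap, h1, h2, asymm h2']
  rw [Finset.sum_congr rfl hpt, Finset.sum_add_distrib]
  rfl

private lemma reindex_cross {m : ℕ} (f g : Fin m → ℤ) (σ : Equiv.Perm (Fin m)) :
    {st : Fin m × Fin m | f (σ st.2) < f (σ st.1) ∧ g (σ st.1) < g (σ st.2)}.ncard
      = {st : Fin m × Fin m | f st.2 < f st.1 ∧ g st.1 < g st.2}.ncard := by
  have hset : {st : Fin m × Fin m | f (σ st.2) < f (σ st.1) ∧ g (σ st.1) < g (σ st.2)}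
      = (fun st : Fin m × Fin m => (σ.symm st.1, σ.symm st.2)) ''
        {st : Fin m × Fin m | f st.2 < f st.1 ∧ g st.1 < g st.2} := by
    ext ⟨s, t⟩
    constructor
    · intro h
      exact ⟨(σ s, σ t), h, by simp⟩
    · rintro ⟨⟨u, v⟩, h, heq⟩
      obtain ⟨h1, h2⟩ := Prod.mk.injEq .. ▸ heq
      subst h1; subst h2
      simpa using h
  rw [hset]
  apply Set.ncard_image_of_injective
  intro x y h
  rw [Prod.ext_iff] at h ⊢
  exact ⟨σ.symm.injective h.1, σ.symm.injective h.2⟩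

set_option maxHeartbeats 1600000 in
/-- For a sequence of pairs `(a_t, b_t)` with the `a_t` pairwise distinct
and the `b_t` pairwise distinct, and any permutation `σ`, the inversion number of the
sequence `((a_{σ(t)}, b_t))_t` is congruent mod `2` to `inv(σ)` plus the inversion number of
the original sequence. -/

theorem inv_perm_pairs (m : ℕ) (a b : Fin m → ℤ)
    (ha : Function.Injective a) (hb : Function.Injective b) (σ : Equiv.Perm (Fin m)) :
    {st : Fin m × Fin m | a (σ st.2) < a (σ st.1) ∧ b st.1 < b st.2}.ncard ≡
      ({st : Fin m × Fin m | st.1 < st.2 ∧ σ st.2 < σ st.1}.ncard +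
        {st : Fin m × Fin m | a st.2 < a st.1 ∧ b st.1 < b st.2}.ncard) [MOD 2] := by
  classical
  set c : Fin m → ℤ := fun s => ((s : ℕ) : ℤ) with hc
  have hcinj : Function.Injective c := by
    intro x y h
    simp only [hc] at h
    exact Fin.ext (by exact_mod_cast h)
  have haσ : Function.Injective (fun i => a (σ i)) := ha.comp σ.injective
  have hcσ : Function.Injective (fun i => c (σ i)) := hcinj.comp σ.injective
  apply (ZMod.natCast_eq_natCast_iff _ _ 2).mp
  push_cast
  have h1 := key_cross (fun i => a (σ i)) b haσ hb
  beta_reduce at h1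
  have hmidset : {st : Fin m × Fin m | st.1 < st.2 ∧ σ st.2 < σ st.1}
      = {st : Fin m × Fin m | c (σ st.2) < c (σ st.1) ∧ c st.1 < c st.2} := by
    ext ⟨s, t⟩
    simp only [Set.mem_setOf_eq, hc]
    constructor
    · rintro ⟨hx, hy⟩
      exact ⟨by exact_mod_cast hy, by exact_mod_cast hx⟩
    · rintro ⟨hx, hy⟩
      exact ⟨by exact_mod_cast hy, by exact_mod_cast hx⟩
  have h2 := key_cross (fun i => c (σ i)) c hcσ hcinj
  beta_reduce at h2
  have h3 := key_cross a b ha hb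
  have h4 : Gs (fun i => a (σ i)) + Gs (fun i => c (σ i)) = Gs a + Gs c := by
    have k1 := key_cross (fun i => a (σ i)) (fun i => c (σ i)) haσ hcσ
    beta_reduce at k1
    rw [reindex_cross a c σ] at k1
    rw [key_cross a c ha hcinj] at k1
    exact k1.symm
  rw [h1, hmidset, h2, h3]
  revert h4
  generalize Gs (fun i => a (σ i)) = x
  generalize Gs (fun i => c (σ i)) = y
  generalize Gs a = z
  generalize Gs c = w
  generalize Gs b = u
  revert x y z w u
  decide
end
end

section
/- Let μ ⊆ λ be partitions with at most k parts (λ = (λ_1, …, λ_k), μ = (μ_1, …, μ_k), allowing zero parts). Then s_{λ/μ} = det(h_{λ_i − μ_j − i + j})_{1 ≤ i,j ≤ k}, where h_r denotes the complete homogeneous symmetric function of degree r (the sum of all monomials of degree r in x_1, x_2, …), with h_0 = 1 and h_r = 0 for r < 0. -/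
noncomputable section

/-!
Proof idea (Lindström–Gessel–Viennot). Encode a lattice path by the number `m s` of unit east
steps it takes at height `s`, each weighted by `x_s`. Expanding the determinant, the coefficient
of `x^μ₀` in `det (h_{v_i - u_j})` is the signed count of families of paths, path `j` running
from `u_j = μ_{j+1} - (j+1)` to `v_{σ j}` where `v_i = λ_{i+1} - (i+1)`, whose numbers of east
steps at each height `s` add up to `μ₀ s`. Exchanging the tails of two paths at the first meeting
point (lowest height, then leftmost, then the smallest and the largest index of the paths through
it) is a sign-reversing involution of the intersecting families: the exchange leaves the first
meeting point and the paths through it unchanged. Since `u` and `v` decrease strictly, a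
non-intersecting family has `σ = 1`, and such families are the semistandard tableaux of shape
`λ/μ`: the east steps of path `j` at height `t` are the boxes of row `j + 1` filled with `t`, the
step ending at abscissa `x` being the box of content `x`. Rows then weakly increase automatically,
and strict increase down the columns says exactly that consecutive paths never meet.
-/

namespace JacobiTrudi

open Finset Filter

section Paths

/-- The path from `(a, 0)` taking `m s` unit steps east at height `s` and one step north after
each height; `pathPos a m t` is its abscissa on arrival at height `t`. -/
def pathPos (a : ℤ) (m : ℕ →₀ ℕ) (t : ℕ) : ℤ := a + ∑ s ∈ range t, (m s : ℤ)

variable {a a' : ℤ} {m m' : ℕ →₀ ℕ}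

@[simp] lemma pathPos_zero : pathPos a m 0 = a := by simp [pathPos]

lemma pathPos_succ (t : ℕ) : pathPos a m (t + 1) = pathPos a m t + m t := by
  simp [pathPos, sum_range_succ, add_assoc]

lemma pathPos_mono : Monotone (pathPos a m) :=
  monotone_nat_of_le_succ fun t => by simp [pathPos_succ]

lemma pathPos_injective : Function.Injective (pathPos a) := fun m m' h => by
  ext s
  have := congrFun h (s + 1)
  rw [pathPos_succ, pathPos_succ, congrFun h s] at this
  exact_mod_cast add_left_cancel this

lemma eventually_pathPos_eq : ∀ᶠ t in atTop, pathPos a m t = a + m.degree := by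
  obtain ⟨N, hN⟩ := m.support.bddAbove
  filter_upwards [eventually_gt_atTop N] with t ht
  rw [pathPos, Finsupp.degree_apply, ← sum_subset (fun s hs => mem_range.2 ((hN hs).trans_lt ht))
    fun s _ hs => by simp [Finsupp.notMem_support_iff.1 hs]]
  push_cast
  rfl

lemma pathPos_le_add_degree (t : ℕ) : pathPos a m t ≤ a + m.degree := by
  obtain ⟨T, hT⟩ := (eventually_pathPos_eq.and (eventually_ge_atTop t)).exists_forall_of_atTop
  exact (pathPos_mono (hT T le_rfl).2).trans (hT T le_rfl).1.le

def OnPath (a : ℤ) (m : ℕ →₀ ℕ) (t : ℕ) (x : ℤ) : Prop :=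
  pathPos a m t ≤ x ∧ x ≤ pathPos a m (t + 1)

lemma exists_onPath_onPath_of_le (h₀ : a' ≤ a) {t : ℕ}
    (ht : pathPos a m t ≤ pathPos a' m' (t + 1)) :
    ∃ s x, OnPath a m s x ∧ OnPath a' m' s x := by
  have hex : ∃ t, pathPos a m t ≤ pathPos a' m' (t + 1) := ⟨t, ht⟩
  obtain ⟨s, hs, hmin⟩ : ∃ s, pathPos a m s ≤ pathPos a' m' (s + 1) ∧
      ∀ s' < s, ¬pathPos a m s' ≤ pathPos a' m' (s' + 1) :=
    ⟨Nat.find hex, Nat.find_spec hex, fun _ => Nat.find_min hex⟩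
  have hprev : pathPos a' m' s ≤ pathPos a m s := by
    cases s with
    | zero => simpa using h₀
    | succ s => exact (lt_of_not_ge (hmin s s.lt_succ_self)).le.trans (pathPos_mono s.le_succ)
  exact ⟨s, pathPos a m s, ⟨le_rfl, pathPos_mono (Nat.le_succ s)⟩, hprev, hs⟩

lemma lt_of_forall_succ_lt {P : ℕ → ℕ → ℤ} (hP : ∀ i, Monotone (P i))
    (h : ∀ i t, P (i + 1) (t + 1) < P i t) {i j : ℕ} (hij : i < j) (t : ℕ) :
    P j (t + 1) < P i t := by
  have : IsTrans ℕ fun i j => ∀ t, P j (t + 1) < P i t :=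
    ⟨fun a b c hab hbc t => (hbc t).trans_le ((hP b t.le_succ).trans (hab t).le)⟩
  exact Nat.rel_of_forall_rel_succ_of_lt (fun i j => ∀ t, P j (t + 1) < P i t) (f := id) h hij t

lemma natCast_apply_eq_pathPos_sub (s : ℕ) : (m s : ℤ) = pathPos a m (s + 1) - pathPos a m s := by
  rw [pathPos_succ]; ring

def splice (t : ℕ) (m : ℕ →₀ ℕ) (n : ℕ) (m' : ℕ →₀ ℕ) : ℕ →₀ ℕ :=
  m.filter (· < t) + Finsupp.single t n + m'.filter (t < ·)

lemma splice_apply (t : ℕ) (n : ℕ) (s : ℕ) :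
    splice t m n m' s = if s < t then m s else if s = t then n else m' s := by
  simp only [splice, Finsupp.add_apply, Finsupp.filter_apply, Finsupp.single_apply]
  split_ifs <;> omega

lemma pathPos_splice {t n : ℕ} (h : pathPos a m t + n = pathPos a' m' (t + 1)) (s : ℕ) :
    pathPos a (splice t m n m') s = if s ≤ t then pathPos a m s else pathPos a' m' s := by
  induction s with
  | zero => simp
  | succ s ih =>
    rw [pathPos_succ, ih, splice_apply]
    rcases lt_trichotomy s t with hst | rfl | hst
    · simp [hst, hst.le, Nat.succ_le_of_lt hst, pathPos_succ]
    · simp [h]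
    · simp [hst.not_ge, hst.not_gt, hst.ne', (Nat.lt_succ_of_lt hst).not_ge, pathPos_succ]

end Paths

section Families

variable {ι : Type*} (u : ι → ℤ)

def tailSwap (l : ι → ℕ →₀ ℕ) (t : ℕ) (π : Equiv.Perm ι) (c : ι) : ℕ →₀ ℕ :=
  splice t (l c) (pathPos (u (π c)) (l (π c)) (t + 1) - pathPos (u c) (l c) t).toNat (l (π c))

def EndsAt (v : ι → ℤ) (σ : Equiv.Perm ι) (l : ι → ℕ →₀ ℕ) : Prop :=
  ∀ j, u j + (l j).degree = v (σ j)

def IsMeet (l : ι → ℕ →₀ ℕ) (t : ℕ) (x : ℤ) : Prop :=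
  ∃ a b, a ≠ b ∧ OnPath (u a) (l a) t x ∧ OnPath (u b) (l b) t x

def Intersecting (l : ι → ℕ →₀ ℕ) : Prop := ∃ t x, IsMeet u l t x

def firstMeetHeight (l : ι → ℕ →₀ ℕ) : ℕ := sInf {t | ∃ x, IsMeet u l t x}

def firstMeetX (l : ι → ℕ →₀ ℕ) : ℤ := sInf {x | IsMeet u l (firstMeetHeight u l) x}

variable {u} {l : ι → ℕ →₀ ℕ} {t : ℕ} {π : Equiv.Perm ι}

lemma pathPos_tailSwap
    (h : ∀ c, pathPos (u c) (l c) t ≤ pathPos (u (π c)) (l (π c)) (t + 1)) (c : ι) (s : ℕ) :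
    pathPos (u c) (tailSwap u l t π c) s =
      if s ≤ t then pathPos (u c) (l c) s else pathPos (u (π c)) (l (π c)) s :=
  pathPos_splice (by rw [Int.toNat_of_nonneg (sub_nonneg.2 (h c))]; ring) s

lemma endsAt_tailSwap {v : ι → ℤ} {σ : Equiv.Perm ι}
    (h : ∀ c, pathPos (u c) (l c) t ≤ pathPos (u (π c)) (l (π c)) (t + 1))
    (hl : EndsAt u v σ l) : EndsAt u v (σ * π) (tailSwap u l t π) := fun j => by
  obtain ⟨T, hT, hπT, htT⟩ := (eventually_pathPos_eq.and
    (eventually_pathPos_eq.and (eventually_gt_atTop t))).exists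
  rw [← hT, pathPos_tailSwap h, if_neg htT.not_ge, hπT, hl, Equiv.Perm.mul_apply]

section

variable [LinearOrder ι]

lemma not_intersecting_of_lt
    (h : ∀ i j, i < j → ∀ t, pathPos (u j) (l j) (t + 1) < pathPos (u i) (l i) t) :
    ¬Intersecting u l := by
  rintro ⟨t, x, a, b, hab, ha, hb⟩
  rcases hab.lt_or_gt with hlt | hlt
  · exact (h a b hlt t).not_ge (ha.1.trans hb.2)
  · exact (h b a hlt t).not_ge (hb.1.trans ha.2)

lemma pathPos_lt_of_not_intersecting (hu : StrictAnti u) (h : ¬Intersecting u l) {i j : ι}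
    (hij : i < j) (t : ℕ) : pathPos (u j) (l j) (t + 1) < pathPos (u i) (l i) t := by
  by_contra! hle
  obtain ⟨s, x, hi, hj⟩ := exists_onPath_onPath_of_le (hu hij).le hle
  exact h ⟨s, x, i, j, hij.ne, hi, hj⟩

end

variable [Fintype ι]

lemma bddBelow_isMeet (t : ℕ) : BddBelow {x | IsMeet u l t x} := by
  refine ((Set.finite_iUnion fun a =>
    Set.finite_Icc (pathPos (u a) (l a) t) (pathPos (u a) (l a) (t + 1))).subset ?_).bddBelow
  rintro x ⟨a, -, -, ha, -⟩
  exact Set.mem_iUnion.2 ⟨a, ha⟩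

lemma isMeet_first (h : Intersecting u l) :
    IsMeet u l (firstMeetHeight u l) (firstMeetX u l) :=
  Int.csInf_mem (Nat.sInf_mem h) (bddBelow_isMeet _)

lemma sum_pathPos_tailSwap
    (h : ∀ c, pathPos (u c) (l c) t ≤ pathPos (u (π c)) (l (π c)) (t + 1)) (s : ℕ) :
    ∑ c, pathPos (u c) (tailSwap u l t π c) s = ∑ c, pathPos (u c) (l c) s := by
  simp_rw [pathPos_tailSwap h]
  split_ifs
  · rfl
  · exact Equiv.sum_comp π fun c => pathPos (u c) (l c) s

lemma sum_tailSwap (h : ∀ c, pathPos (u c) (l c) t ≤ pathPos (u (π c)) (l (π c)) (t + 1)) :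
    ∑ c, tailSwap u l t π c = ∑ c, l c := by
  ext s
  rw [Finsupp.finsetSum_apply, Finsupp.finsetSum_apply]
  have hsteps (l : ι → ℕ →₀ ℕ) : ∑ c, (l c s : ℤ) =
      ∑ c, pathPos (u c) (l c) (s + 1) - ∑ c, pathPos (u c) (l c) s := by
    rw [← sum_sub_distrib]
    exact sum_congr rfl fun c _ => natCast_apply_eq_pathPos_sub s
  zify
  rw [hsteps, hsteps, sum_pathPos_tailSwap h, sum_pathPos_tailSwap h]

open scoped Classical in
variable (u) in
def meetIndices (l : ι → ℕ →₀ ℕ) : Finset ι :=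
  {c | OnPath (u c) (l c) (firstMeetHeight u l) (firstMeetX u l)}

lemma mem_meetIndices {c : ι} :
    c ∈ meetIndices u l ↔ OnPath (u c) (l c) (firstMeetHeight u l) (firstMeetX u l) := by
  simp [meetIndices]

variable [LinearOrder ι]

lemma eq_one_of_not_intersecting {v : ι → ℤ} {σ : Equiv.Perm ι} (hu : StrictAnti u)
    (hv : StrictAnti v) (hl : EndsAt u v σ l) (hni : ¬Intersecting u l) : σ = 1 := by
  suffices hσ : StrictMono σ from Equiv.ext fun _ => hσ.apply_eq
  intro i j hij
  by_contra hge
  have hlt : σ j < σ i := (not_lt.1 hge).lt_of_ne (σ.injective.ne hij.ne')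
  obtain ⟨T, hiT, hjT⟩ := (eventually_pathPos_eq (a := u i) (m := l i)).and
    (eventually_pathPos_eq (a := u j) (m := l j)) |>.exists
  -- path `i` starts to the right of path `j` but ends to the left of it
  have hcross : pathPos (u i) (l i) T ≤ pathPos (u j) (l j) (T + 1) := by
    rw [hiT, hl i]
    exact ((hv hlt).trans_eq ((hl j).symm.trans hjT.symm)).le.trans (pathPos_mono (Nat.le_succ T))
  obtain ⟨s, x, hi, hj⟩ := exists_onPath_onPath_of_le (hu hij).le hcross
  exact hni ⟨s, x, i, j, hij.ne, hi, hj⟩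

variable (u) in
def meetSwap (l : ι → ℕ →₀ ℕ) : Equiv.Perm ι :=
  if h : (meetIndices u l).Nonempty then Equiv.swap ((meetIndices u l).min' h)
    ((meetIndices u l).max' h) else 1

variable (u) in
def untangle (l : ι → ℕ →₀ ℕ) : ι → ℕ →₀ ℕ :=
  tailSwap u l (firstMeetHeight u l) (meetSwap u l)

lemma meetSwap_apply_mem {c : ι} (hc : c ∈ meetIndices u l) :
    meetSwap u l c ∈ meetIndices u l := by
  have hne : (meetIndices u l).Nonempty := ⟨c, hc⟩
  rw [meetSwap, dif_pos hne]
  rcases eq_or_ne c ((meetIndices u l).min' hne) with rfl | h₁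
  · simpa using max'_mem _ hne
  rcases eq_or_ne c ((meetIndices u l).max' hne) with rfl | h₂
  · simpa using min'_mem _ hne
  rwa [Equiv.swap_apply_of_ne_of_ne h₁ h₂]

lemma meetSwap_apply_of_notMem {c : ι} (hc : c ∉ meetIndices u l) : meetSwap u l c = c := by
  unfold meetSwap
  split_ifs with hne
  · exact Equiv.swap_apply_of_ne_of_ne (fun h => hc (h ▸ min'_mem _ hne))
      fun h => hc (h ▸ max'_mem _ hne)
  · rfl

lemma meetSwap_involutive : Function.Involutive (meetSwap u l) := by
  unfold meetSwap
  split_ifs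
  · exact Equiv.swap_apply_self _ _
  · exact fun _ => rfl

lemma le_pathPos_meetSwap (c : ι) :
    pathPos (u c) (l c) (firstMeetHeight u l) ≤
      pathPos (u (meetSwap u l c)) (l (meetSwap u l c)) (firstMeetHeight u l + 1) := by
  by_cases hc : c ∈ meetIndices u l
  · exact (mem_meetIndices.1 hc).1.trans (mem_meetIndices.1 (meetSwap_apply_mem hc)).2
  · rw [meetSwap_apply_of_notMem hc]
    exact pathPos_mono (Nat.le_succ _)

lemma pathPos_untangle (c : ι) (s : ℕ) :
    pathPos (u c) (untangle u l c) s = if s ≤ firstMeetHeight u l then pathPos (u c) (l c) s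
      else pathPos (u (meetSwap u l c)) (l (meetSwap u l c)) s :=
  pathPos_tailSwap le_pathPos_meetSwap c s

lemma onPath_untangle_of_lt {c : ι} {t : ℕ} {x : ℤ} (ht : t < firstMeetHeight u l) :
    OnPath (u c) (untangle u l c) t x ↔ OnPath (u c) (l c) t x := by
  simp only [OnPath, pathPos_untangle, if_pos ht.le, if_pos (Nat.succ_le_of_lt ht)]

lemma onPath_untangle_first {c : ι} {x : ℤ} :
    OnPath (u c) (untangle u l c) (firstMeetHeight u l) x ↔
      pathPos (u c) (l c) (firstMeetHeight u l) ≤ x ∧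
        x ≤ pathPos (u (meetSwap u l c)) (l (meetSwap u l c)) (firstMeetHeight u l + 1) := by
  simp only [OnPath, pathPos_untangle, if_pos le_rfl, if_neg (Nat.lt_succ_self _).not_ge]

lemma onPath_untangle_firstMeet_iff {c : ι} :
    OnPath (u c) (untangle u l c) (firstMeetHeight u l) (firstMeetX u l) ↔
      OnPath (u c) (l c) (firstMeetHeight u l) (firstMeetX u l) := by
  rw [onPath_untangle_first]
  by_cases hc : c ∈ meetIndices u l
  · exact ⟨fun h => ⟨h.1, (mem_meetIndices.1 hc).2⟩,
      fun h => ⟨h.1, (mem_meetIndices.1 (meetSwap_apply_mem hc)).2⟩⟩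
  · rw [meetSwap_apply_of_notMem hc]; rfl

lemma isMeet_of_isMeet_untangle {x : ℤ} (h : IsMeet u (untangle u l) (firstMeetHeight u l) x) :
    IsMeet u l (firstMeetHeight u l) x := by
  set π := meetSwap u l
  have hπ : Function.Involutive π := meetSwap_involutive
  -- the new segment of `c` at the meeting height is covered by the old segments of `c` and `π c`
  have hcover (c : ι) (hc : OnPath (u c) (untangle u l c) (firstMeetHeight u l) x) :
      OnPath (u c) (l c) (firstMeetHeight u l) x ∨
        OnPath (u (π c)) (l (π c)) (firstMeetHeight u l) x := by
    rw [onPath_untangle_first] at hc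
    by_cases hx : x ≤ pathPos (u c) (l c) (firstMeetHeight u l + 1)
    · exact .inl ⟨hc.1, hx⟩
    · have := le_pathPos_meetSwap (u := u) (l := l) (π c)
      rw [hπ c] at this
      exact .inr ⟨this.trans (le_of_not_ge hx), hc.2⟩
  obtain ⟨a, b, hab, ha, hb⟩ := h
  by_cases hπab : π a = b
  · rw [onPath_untangle_first, hπab] at ha
    rw [onPath_untangle_first, ← hπab, hπ a] at hb
    exact ⟨a, b, hab, ⟨ha.1, hb.2⟩, ⟨hπab ▸ hb.1, ha.2⟩⟩
  have hba : π b ≠ a := fun h => hπab (h ▸ hπ b)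
  rcases hcover a ha with ha' | ha' <;> rcases hcover b hb with hb' | hb'
  · exact ⟨a, b, hab, ha', hb'⟩
  · exact ⟨a, π b, hba.symm, ha', hb'⟩
  · exact ⟨π a, b, hπab, ha', hb'⟩
  · exact ⟨π a, π b, hπ.injective.ne hab, ha', hb'⟩

lemma isMeet_untangle_first (h : Intersecting u l) :
    IsMeet u (untangle u l) (firstMeetHeight u l) (firstMeetX u l) := by
  obtain ⟨a, b, hab, ha, hb⟩ := isMeet_first h
  exact ⟨a, b, hab, onPath_untangle_firstMeet_iff.2 ha, onPath_untangle_firstMeet_iff.2 hb⟩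

lemma intersecting_untangle (h : Intersecting u l) : Intersecting u (untangle u l) :=
  ⟨_, _, isMeet_untangle_first h⟩

lemma firstMeetHeight_untangle (h : Intersecting u l) :
    firstMeetHeight u (untangle u l) = firstMeetHeight u l := by
  refine le_antisymm (Nat.sInf_le ⟨_, isMeet_untangle_first h⟩) (le_of_not_gt fun hlt => ?_)
  obtain ⟨x, a, b, hab, ha, hb⟩ := Nat.sInf_mem (intersecting_untangle h)
  exact Nat.notMem_of_lt_sInf hlt
    ⟨x, a, b, hab, (onPath_untangle_of_lt hlt).1 ha, (onPath_untangle_of_lt hlt).1 hb⟩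

lemma firstMeetX_untangle (h : Intersecting u l) :
    firstMeetX u (untangle u l) = firstMeetX u l := by
  have hmeet := isMeet_untangle_first h
  rw [← firstMeetHeight_untangle h] at hmeet
  refine le_antisymm (csInf_le (bddBelow_isMeet _) hmeet) (le_csInf ⟨_, hmeet⟩ fun x hx => ?_)
  rw [firstMeetHeight_untangle h] at hx
  exact csInf_le (bddBelow_isMeet _) (isMeet_of_isMeet_untangle hx)

lemma meetSwap_untangle (h : Intersecting u l) : meetSwap u (untangle u l) = meetSwap u l := by
  have : meetIndices u (untangle u l) = meetIndices u l := by
    ext c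
    rw [mem_meetIndices, mem_meetIndices, firstMeetHeight_untangle h, firstMeetX_untangle h,
      onPath_untangle_firstMeet_iff]
  rw [meetSwap, meetSwap, this]

lemma untangle_untangle (h : Intersecting u l) : untangle u (untangle u l) = l := by
  funext c
  refine pathPos_injective (a := u c) (funext fun s => ?_)
  simp only [pathPos_untangle, firstMeetHeight_untangle h, meetSwap_untangle h]
  split_ifs <;> simp [meetSwap_involutive c]

lemma sign_meetSwap (h : Intersecting u l) : Equiv.Perm.sign (meetSwap u l) = -1 := by
  obtain ⟨a, b, hab, ha, hb⟩ := isMeet_first h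
  have hcard : 1 < #(meetIndices u l) :=
    one_lt_card.2 ⟨a, mem_meetIndices.2 ha, b, mem_meetIndices.2 hb, hab⟩
  have hne : (meetIndices u l).Nonempty := ⟨a, mem_meetIndices.2 ha⟩
  rw [meetSwap, dif_pos hne, Equiv.Perm.sign_swap (min'_lt_max'_of_card _ hcard).ne]

lemma sum_untangle : ∑ c, untangle u l c = ∑ c, l c := sum_tailSwap le_pathPos_meetSwap

lemma endsAt_untangle {v : ι → ℤ} {σ : Equiv.Perm ι} (hl : EndsAt u v σ l) :
    EndsAt u v (σ * meetSwap u l) (untangle u l) :=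
  endsAt_tailSwap le_pathPos_meetSwap hl

variable {v : ι → ℤ}

open scoped Classical in
lemma sum_sign_intersecting_eq_zero (μ₀ : ℕ →₀ ℕ) :
    ∑ p ∈ univ ×ˢ univ.piAntidiag μ₀ with EndsAt u v p.1 p.2 ∧ Intersecting u p.2,
      (Equiv.Perm.sign p.1 : ℤ) = 0 := by
  refine sum_involution (fun p _ => (p.1 * meetSwap u p.2, untangle u p.2)) ?_ ?_ ?_ ?_
  · rintro ⟨σ, l⟩ hp
    rw [Equiv.Perm.sign_mul, sign_meetSwap (mem_filter.1 hp).2.2]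
    simp
  · rintro ⟨σ, l⟩ hp - heq
    have h1 : meetSwap u l = 1 := mul_eq_left.1 (congrArg Prod.fst heq)
    have := sign_meetSwap (mem_filter.1 hp).2.2
    simp [h1] at this
  · rintro ⟨σ, l⟩ hp
    simp only [mem_filter, mem_product, mem_univ, true_and, mem_piAntidiag] at hp ⊢
    exact ⟨⟨sum_untangle.trans hp.1.1, by simp⟩, endsAt_untangle hp.2.1,
      intersecting_untangle hp.2.2⟩
  · rintro ⟨σ, l⟩ hp
    have h := (mem_filter.1 hp).2.2
    simp only [meetSwap_untangle h, untangle_untangle h, mul_assoc, Prod.mk.injEq, and_true]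
    exact mul_eq_left.2 (Equiv.ext meetSwap_involutive)

open scoped Classical in
/-- The Lindström–Gessel–Viennot lemma. -/
theorem sum_sign_mul_card_endsAt (hu : StrictAnti u) (hv : StrictAnti v) (μ₀ : ℕ →₀ ℕ) :
    ∑ σ : Equiv.Perm ι, (Equiv.Perm.sign σ : ℤ) * #{l ∈ univ.piAntidiag μ₀ | EndsAt u v σ l} =
      #{l ∈ univ.piAntidiag μ₀ | EndsAt u v 1 l ∧ ¬Intersecting u l} := by
  have hsplit (σ : Equiv.Perm ι) : #{l ∈ univ.piAntidiag μ₀ | EndsAt u v σ l} =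
      #{l ∈ univ.piAntidiag μ₀ | EndsAt u v σ l ∧ Intersecting u l} +
        #{l ∈ univ.piAntidiag μ₀ | EndsAt u v σ l ∧ ¬Intersecting u l} := by
    rw [← filter_filter, ← filter_filter, card_filter_add_card_filter_not]
  have hcancel : ∑ σ : Equiv.Perm ι, (Equiv.Perm.sign σ : ℤ) *
      #{l ∈ univ.piAntidiag μ₀ | EndsAt u v σ l ∧ Intersecting u l} = 0 := by
    rw [← sum_sign_intersecting_eq_zero (u := u) (v := v) μ₀, sum_filter, sum_product]
    simp [sum_ite, mul_comm]
  have hsingle : ∑ σ : Equiv.Perm ι, (Equiv.Perm.sign σ : ℤ) *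
      #{l ∈ univ.piAntidiag μ₀ | EndsAt u v σ l ∧ ¬Intersecting u l} =
        #{l ∈ univ.piAntidiag μ₀ | EndsAt u v 1 l ∧ ¬Intersecting u l} := by
    rw [sum_eq_single 1 (fun σ _ hσ => ?_) (by simp)]
    · simp
    · rw [filter_false_of_mem fun l _ hl => hσ (eq_one_of_not_intersecting hu hv hl.1 hl.2)]
      simp
  simp only [hsplit, Nat.cast_add, mul_add, sum_add_distrib, hcancel, hsingle, zero_add]

end Families

section Determinant

lemma sum_finsuppAntidiag {κ μ M : Type*} [DecidableEq κ] [AddCommMonoid μ] [HasAntidiagonal μ]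
    [DecidableEq μ] [AddCommMonoid M] (s : Finset κ) (n : μ) (f : (κ → μ) → M) :
    ∑ l ∈ s.finsuppAntidiag n, f l = ∑ l ∈ s.piAntidiag n, f l := by
  rw [finsuppAntidiag, sum_map]
  exact sum_attach _ f

lemma coeff_hSym (d : ℕ →₀ ℕ) (r : ℤ) :
    MvPowerSeries.coeff d (hSym r) = if (d.degree : ℤ) = r then 1 else 0 := rfl

open scoped Classical in
lemma coeff_det_hSym {ι : Type*} [Fintype ι] [DecidableEq ι] (u v : ι → ℤ) (μ₀ : ℕ →₀ ℕ) :
    MvPowerSeries.coeff μ₀ (Matrix.det (Matrix.of fun i j => hSym (v i - u j))) =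
      ∑ σ : Equiv.Perm ι, (Equiv.Perm.sign σ : ℤ) *
        #{l ∈ univ.piAntidiag μ₀ | EndsAt u v σ l} := by
  rw [Matrix.det_apply, map_sum]
  refine sum_congr rfl fun σ _ => ?_
  simp only [Matrix.of_apply, Units.smul_def, map_zsmul, smul_eq_mul]
  congr 1
  rw [MvPowerSeries.coeff_prod, sum_finsuppAntidiag univ μ₀
    fun l => ∏ i, MvPowerSeries.coeff (l i) (hSym (v (σ i) - u i))]
  simp only [coeff_hSym, prod_boole, sum_boole, mem_univ, true_implies, EndsAt,
    eq_sub_iff_add_eq, add_comm (u _)]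

end Determinant

section Rows

variable {a a' : ℤ} {m m' : ℕ →₀ ℕ} {f g : ℤ → ℕ}

def valueCount (s : Finset ℤ) (f : ℤ → ℕ) : ℕ →₀ ℕ := Multiset.toFinsupp (s.val.map f)

lemma valueCount_apply (s : Finset ℤ) (n : ℕ) : valueCount s f n = #{x ∈ s | f x = n} := by
  simp [valueCount, Multiset.toFinsupp_apply, Multiset.count_map, Finset.card_def, eq_comm]

lemma degree_valueCount (s : Finset ℤ) : (valueCount s f).degree = #s := by
  change (valueCount s f).sum (fun _ => id) = #s
  rw [valueCount, Multiset.toFinsupp_sum_eq]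
  simp

lemma pathPos_valueCount (s : Finset ℤ) (t : ℕ) :
    pathPos a (valueCount s f) (t + 1) = a + #{x ∈ s | f x ≤ t} := by
  simp only [pathPos, valueCount_apply]
  rw [← Nat.cast_sum, sum_card_fiberwise_eq_card_filter]
  simp

/-- `f` is the row filling read off the path `m` from `a`: on the cells of contents
`a < x ≤ a + m.degree`, the entries at most `t` are those in cells of content at most
`pathPos a m (t + 1)`. -/
def IsRowOfPath (a : ℤ) (m : ℕ →₀ ℕ) (f : ℤ → ℕ) : Prop :=
  ∀ x ∈ Ioc a (a + m.degree), ∀ t, f x ≤ t ↔ x ≤ pathPos a m (t + 1)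

lemma isRowOfPath_valueCount {b : ℤ} (hf : MonotoneOn f (Ioc a b)) :
    IsRowOfPath a (valueCount (Ioc a b) f) f := by
  intro x hx t
  rw [degree_valueCount, Int.card_Ioc] at hx
  have hxb : x ∈ Ioc a b := by simp only [mem_Ioc] at hx ⊢; omega
  rw [pathPos_valueCount]
  constructor
  · intro hxt
    have hsub : Ioc a x ⊆ {y ∈ Ioc a b | f y ≤ t} := fun y hy => by
      have hyb : y ∈ Ioc a b :=
        mem_Ioc.2 ⟨(mem_Ioc.1 hy).1, (mem_Ioc.1 hy).2.trans (mem_Ioc.1 hxb).2⟩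
      exact mem_filter.2 ⟨hyb, (hf hyb hxb (mem_Ioc.1 hy).2).trans hxt⟩
    have := card_le_card hsub
    rw [Int.card_Ioc] at this
    simp only [mem_Ioc] at hxb
    omega
  · intro hx'
    by_contra! htx
    have hsub : {y ∈ Ioc a b | f y ≤ t} ⊆ Ioc a (x - 1) := fun y hy => by
      simp only [mem_Ioc, mem_filter] at hy ⊢
      refine ⟨hy.1.1, ?_⟩
      by_contra! hxy
      exact (htx.trans_le (hf hxb (mem_Ioc.2 hy.1) (by omega))).not_ge hy.2
    have := card_le_card hsub
    rw [Int.card_Ioc] at this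
    simp only [mem_Ioc] at hxb
    omega

def rowOfPath (a : ℤ) (m : ℕ →₀ ℕ) (x : ℤ) : ℕ := sInf {t | x ≤ pathPos a m (t + 1)}

lemma isRowOfPath_rowOfPath : IsRowOfPath a m (rowOfPath a m) := by
  intro x hx t
  have hne : {t | x ≤ pathPos a m (t + 1)}.Nonempty := by
    obtain ⟨T, hT⟩ := (eventually_pathPos_eq (a := a) (m := m)).exists
    exact ⟨T, (mem_Ioc.1 hx).2.trans (hT ▸ pathPos_mono T.le_succ)⟩
  exact ⟨fun h => (Nat.sInf_mem hne).trans (pathPos_mono (Nat.succ_le_succ h)),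
    fun h => Nat.sInf_le h⟩

lemma IsRowOfPath.monotoneOn (h : IsRowOfPath a m f) : MonotoneOn f (Ioc a (a + m.degree)) :=
  fun x hx y hy hxy => (h x hx (f y)).2 (hxy.trans ((h y hy (f y)).1 le_rfl))

lemma IsRowOfPath.eqOn (hf : IsRowOfPath a m f) (hg : IsRowOfPath a m g) :
    Set.EqOn f g (Ioc a (a + m.degree)) := fun x hx =>
  le_antisymm ((hf x hx _).2 ((hg x hx _).1 le_rfl)) ((hg x hx _).2 ((hf x hx _).1 le_rfl))

lemma IsRowOfPath.congr (h : IsRowOfPath a m f) (hfg : Set.EqOn f g (Ioc a (a + m.degree))) :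
    IsRowOfPath a m g := fun x hx t => hfg hx ▸ h x hx t

lemma IsRowOfPath.valueCount_eq (h : IsRowOfPath a m f) :
    valueCount (Ioc a (a + m.degree)) f = m := by
  refine pathPos_injective (a := a) (funext fun t => ?_)
  cases t with
  | zero => simp
  | succ t =>
    have hlo : a ≤ pathPos a m (t + 1) := by
      simpa using pathPos_mono (a := a) (m := m) t.succ.zero_le
    have hhi := pathPos_le_add_degree (a := a) (m := m) (t + 1)
    have : {x ∈ Ioc a (a + m.degree) | f x ≤ t} = Ioc a (pathPos a m (t + 1)) := by
      ext x
      simp only [mem_filter, mem_Ioc]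
      constructor
      · rintro ⟨hx, hxt⟩
        exact ⟨hx.1, (h x (mem_Ioc.2 hx) t).1 hxt⟩
      · rintro ⟨hax, hxP⟩
        exact ⟨⟨hax, hxP.trans hhi⟩, (h x (mem_Ioc.2 ⟨hax, hxP.trans hhi⟩) t).2 hxP⟩
    rw [pathPos_valueCount, this, Int.card_Ioc]
    omega

lemma pathPos_lt_of_colStrict (hf : IsRowOfPath a m f) (hg : IsRowOfPath a' m' g) (ha : a' < a)
    (hb : a' + m'.degree < a + m.degree)
    (hcol : ∀ x, x + 1 ∈ Ioc a (a + m.degree) → x ∈ Ioc a' (a' + m'.degree) → f (x + 1) < g x)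
    (t : ℕ) : pathPos a' m' (t + 1) < pathPos a m t := by
  by_contra! hle
  set y := pathPos a' m' (t + 1)
  have hay : a ≤ pathPos a m t := by simpa using pathPos_mono (a := a) (m := m) t.zero_le
  have hy : y ∈ Ioc a' (a' + m'.degree) := mem_Ioc.2 ⟨by omega, pathPos_le_add_degree _⟩
  have hy₁ : y + 1 ∈ Ioc a (a + m.degree) := by
    simp only [mem_Ioc] at hy ⊢
    omega
  have hlt : f (y + 1) < t := (hcol y hy₁ hy).trans_le ((hg y hy t).2 le_rfl)
  obtain ⟨s, rfl⟩ : ∃ s, t = s + 1 := Nat.exists_eq_add_one.2 ((Nat.zero_le _).trans_lt hlt)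
  have := (hf (y + 1) hy₁ s).1 (Nat.lt_succ_iff.1 hlt)
  omega

lemma colStrict_of_pathPos_lt (hf : IsRowOfPath a m f) (hg : IsRowOfPath a' m' g)
    (hP : ∀ t, pathPos a' m' (t + 1) < pathPos a m t) {x : ℤ}
    (hx₁ : x + 1 ∈ Ioc a (a + m.degree)) (hx : x ∈ Ioc a' (a' + m'.degree)) :
    f (x + 1) < g x := by
  have h1 : x + 1 ≤ pathPos a m (g x) := ((hg x hx (g x)).1 le_rfl).trans_lt (hP (g x))
  cases hgx : g x with
  | zero =>
    rw [hgx, pathPos_zero] at h1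
    exact absurd h1 (by simp only [mem_Ioc] at hx₁; omega)
  | succ s =>
    rw [hgx] at h1
    exact Nat.lt_succ_of_le ((hf _ hx₁ s).2 h1)

end Rows

section Tableaux

variable {lam mu : Partition'} {k : ℕ}

def shiftedPart (p : Partition') (j : ℕ) : ℤ := p.part (j + 1) - (j + 1)

lemma shiftedPart_strictAnti (p : Partition') : StrictAnti (shiftedPart p) := fun i j hij => by
  have : p.part (j + 1) ≤ p.part (i + 1) := p.antitone (by omega)
  simp only [shiftedPart]
  omega

lemma strictAnti_shiftedPart_fin (p : Partition') (k : ℕ) :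
    StrictAnti fun j : Fin k => shiftedPart p j :=
  (shiftedPart_strictAnti p).comp_strictMono Fin.val_strictMono

lemma shiftedPart_le_of_le (hlk : ∀ i, k < i → lam.part i = 0) {j : ℕ} (hj : k ≤ j) :
    shiftedPart lam j ≤ shiftedPart mu j := by
  simp only [shiftedPart, hlk (j + 1) (by omega)]
  omega

/-- The box in row `j + 1` of content `x`. -/
def rowCell (j : ℕ) (x : ℤ) : Box := (j + 1, x + j + 1)

lemma rowCell_injective (j : ℕ) : Function.Injective (rowCell j) := fun x y h => by
  simpa [rowCell] using congrArg Prod.snd h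

lemma rowCell_mem_skewCells {j : ℕ} {x : ℤ} :
    rowCell j x ∈ skewCells lam mu ↔ x ∈ Ioc (shiftedPart mu j) (shiftedPart lam j) := by
  have : ((j : ℤ) + 1).toNat = j + 1 := by omega
  simp only [rowCell, skewCells, Set.mem_ofPred_eq, this, mem_Ioc, shiftedPart]
  omega

lemma exists_eq_rowCell {b : Box} (hb : b ∈ skewCells lam mu) : ∃ j x, b = rowCell j x :=
  ⟨b.1.toNat - 1, boxContent b, by
    obtain ⟨h1, -⟩ := hb
    ext <;> simp [rowCell, boxContent] <;> omega⟩

lemma lt_of_rowCell_mem_skewCells (hlk : ∀ i, k < i → lam.part i = 0) {j : ℕ} {x : ℤ}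
    (hb : rowCell j x ∈ skewCells lam mu) : j < k := by
  by_contra! hj
  have := shiftedPart_le_of_le (mu := mu) hlk hj
  have := rowCell_mem_skewCells.1 hb
  simp only [mem_Ioc] at this
  omega

lemma rowCell_right (j : ℕ) (x : ℤ) :
    ((rowCell j x).1, (rowCell j x).2 + 1) = rowCell j (x + 1) := by
  simp only [rowCell]; ext <;> simp; ring

lemma rowCell_below (j : ℕ) (x : ℤ) :
    ((rowCell j (x + 1)).1 + 1, (rowCell j (x + 1)).2) = rowCell (j + 1) x := by
  simp only [rowCell]; ext <;> push_cast <;> ring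

lemma isSSYT_skewCells_iff {T : Box → ℕ} : IsSSYT (skewCells lam mu) T ↔
    (∀ j, MonotoneOn (fun x => T (rowCell j x)) (Ioc (shiftedPart mu j) (shiftedPart lam j))) ∧
    (∀ j x, x + 1 ∈ Ioc (shiftedPart mu j) (shiftedPart lam j) →
      x ∈ Ioc (shiftedPart mu (j + 1)) (shiftedPart lam (j + 1)) →
        T (rowCell j (x + 1)) < T (rowCell (j + 1) x)) ∧
    ∀ b ∉ skewCells lam mu, T b = 0 := by
  refine ⟨fun ⟨hrow, hcol, hzero⟩ => ⟨fun j => ?_, fun j x hx₁ hx => ?_, hzero⟩,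
    fun ⟨hrow, hcol, hzero⟩ => ⟨fun b hb hb' => ?_, fun b hb hb' => ?_, hzero⟩⟩
  · refine monotoneOn_of_le_add_one (by rw [coe_Ioc]; exact Set.ordConnected_Ioc)
      fun x _ hx hx₁ => ?_
    have := hrow _ (rowCell_mem_skewCells.2 hx)
    rw [rowCell_right] at this
    exact this (rowCell_mem_skewCells.2 hx₁)
  · have := hcol _ (rowCell_mem_skewCells.2 hx₁)
    rw [rowCell_below] at this
    exact this (rowCell_mem_skewCells.2 hx)
  · obtain ⟨j, x, rfl⟩ := exists_eq_rowCell hb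
    rw [rowCell_right] at hb' ⊢
    exact hrow j (rowCell_mem_skewCells.1 hb) (rowCell_mem_skewCells.1 hb') (lt_add_one x).le
  · obtain ⟨j, x, rfl⟩ := exists_eq_rowCell hb
    rw [← sub_add_cancel x 1] at hb hb' ⊢
    rw [rowCell_below] at hb' ⊢
    exact hcol j _ (rowCell_mem_skewCells.1 hb) (rowCell_mem_skewCells.1 hb')

variable (lam mu) in
def rowPath (T : Box → ℕ) (j : ℕ) : ℕ →₀ ℕ :=
  valueCount (Ioc (shiftedPart mu j) (shiftedPart lam j)) fun x => T (rowCell j x)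

lemma shiftedPart_add_degree_rowPath (hsub : ∀ i, mu.part i ≤ lam.part i) (T : Box → ℕ) (j : ℕ) :
    shiftedPart mu j + (rowPath lam mu T j).degree = shiftedPart lam j := by
  have := hsub (j + 1)
  rw [rowPath, degree_valueCount, Int.card_Ioc, shiftedPart, shiftedPart]
  omega

lemma isRowOfPath_rowPath {T : Box → ℕ}
    (hT : IsSSYT (skewCells lam mu) T) (j : ℕ) :
    IsRowOfPath (shiftedPart mu j) (rowPath lam mu T j) fun x => T (rowCell j x) :=
  isRowOfPath_valueCount ((isSSYT_skewCells_iff.1 hT).1 j)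

lemma not_intersecting_rowPath (hsub : ∀ i, mu.part i ≤ lam.part i) {T : Box → ℕ}
    (hT : IsSSYT (skewCells lam mu) T) :
    ¬Intersecting (fun j : Fin k => shiftedPart mu j) fun j => rowPath lam mu T j := by
  have hdeg := shiftedPart_add_degree_rowPath hsub T
  have hcol (j : ℕ) (t : ℕ) : pathPos (shiftedPart mu (j + 1)) (rowPath lam mu T (j + 1)) (t + 1) <
      pathPos (shiftedPart mu j) (rowPath lam mu T j) t := by
    refine pathPos_lt_of_colStrict (isRowOfPath_rowPath hT j)
      (isRowOfPath_rowPath hT (j + 1)) (shiftedPart_strictAnti mu j.lt_succ_self)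
      ?_ (fun x hx₁ hx => ?_) t
    · rw [hdeg, hdeg]
      exact shiftedPart_strictAnti lam j.lt_succ_self
    · rw [hdeg] at hx₁ hx
      exact (isSSYT_skewCells_iff.1 hT).2.1 j x hx₁ hx
  exact not_intersecting_of_lt fun i j hij =>
    lt_of_forall_succ_lt (fun _ => pathPos_mono) hcol (Fin.lt_def.1 hij)

open scoped Classical in
variable (lam mu) in
def tableauOfPaths (l : Fin k → ℕ →₀ ℕ) (b : Box) : ℕ :=
  if h : b ∈ skewCells lam mu ∧ b.1.toNat - 1 < k then
    rowOfPath (shiftedPart mu (b.1.toNat - 1)) (l ⟨b.1.toNat - 1, h.2⟩) (boxContent b)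
  else 0

lemma tableauOfPaths_rowCell {l : Fin k → ℕ →₀ ℕ} (j : Fin k) {x : ℤ}
    (hx : x ∈ Ioc (shiftedPart mu j) (shiftedPart lam j)) :
    tableauOfPaths lam mu l (rowCell j x) = rowOfPath (shiftedPart mu j) (l j) x := by
  have hj : (rowCell j x).1.toNat - 1 = j := by simp [rowCell]
  rw [tableauOfPaths, dif_pos ⟨rowCell_mem_skewCells.2 hx, hj ▸ j.2⟩]
  simp only [hj]
  simp [rowCell, boxContent]

lemma isRowOfPath_tableauOfPaths {l : Fin k → ℕ →₀ ℕ}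
    (hl : EndsAt (fun j : Fin k => shiftedPart mu j) (fun j => shiftedPart lam j) 1 l) (j : Fin k) :
    IsRowOfPath (shiftedPart mu j) (l j) fun x => tableauOfPaths lam mu l (rowCell j x) :=
  isRowOfPath_rowOfPath.congr fun x hx =>
    (tableauOfPaths_rowCell j (by rwa [hl j, Equiv.Perm.one_apply] at hx)).symm

lemma isSSYT_tableauOfPaths (hlk : ∀ i, k < i → lam.part i = 0) {l : Fin k → ℕ →₀ ℕ}
    (hl : EndsAt (fun j : Fin k => shiftedPart mu j) (fun j => shiftedPart lam j) 1 l)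
    (hni : ¬Intersecting (fun j : Fin k => shiftedPart mu j) l) :
    IsSSYT (skewCells lam mu) (tableauOfPaths lam mu l) := by
  have hrow := isRowOfPath_tableauOfPaths hl
  have hend (j : Fin k) : shiftedPart mu j + (l j).degree = shiftedPart lam j := hl j
  refine isSSYT_skewCells_iff.2 ⟨fun j => ?_, fun j x hx₁ hx => ?_,
    fun b hb => dif_neg fun h => hb h.1⟩
  · by_cases hj : j < k
    · simpa [← hend ⟨j, hj⟩] using (hrow ⟨j, hj⟩).monotoneOn
    · rw [Ioc_eq_empty_of_le (shiftedPart_le_of_le hlk (not_lt.1 hj)), coe_empty]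
      exact fun _ h => h.elim
  · have hj : j + 1 < k := lt_of_rowCell_mem_skewCells hlk (rowCell_mem_skewCells.2 hx)
    rw [← hend ⟨j, by omega⟩] at hx₁
    rw [← hend ⟨j + 1, hj⟩] at hx
    exact colStrict_of_pathPos_lt (hrow ⟨j, by omega⟩) (hrow ⟨j + 1, hj⟩)
      (pathPos_lt_of_not_intersecting (strictAnti_shiftedPart_fin mu k) hni
        (Fin.mk_lt_mk.2 j.lt_succ_self)) hx₁ hx

lemma rowPath_tableauOfPaths {l : Fin k → ℕ →₀ ℕ}
    (hl : EndsAt (fun j : Fin k => shiftedPart mu j) (fun j => shiftedPart lam j) 1 l) :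
    (fun j : Fin k => rowPath lam mu (tableauOfPaths lam mu l) j) = l := by
  funext j
  have := (isRowOfPath_tableauOfPaths hl j).valueCount_eq
  rwa [hl j, Equiv.Perm.one_apply] at this

lemma tableauOfPaths_rowPath (hsub : ∀ i, mu.part i ≤ lam.part i)
    (hlk : ∀ i, k < i → lam.part i = 0) {T : Box → ℕ} (hT : IsSSYT (skewCells lam mu) T) :
    tableauOfPaths lam mu (fun j : Fin k => rowPath lam mu T j) = T := by
  funext b
  by_cases hb : b ∈ skewCells lam mu
  · obtain ⟨j, x, rfl⟩ := exists_eq_rowCell hb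
    have hx := rowCell_mem_skewCells.1 hb
    rw [tableauOfPaths_rowCell ⟨j, lt_of_rowCell_mem_skewCells hlk hb⟩ hx]
    refine isRowOfPath_rowOfPath.eqOn (isRowOfPath_rowPath hT j) ?_
    rwa [shiftedPart_add_degree_rowPath hsub]
  · rw [tableauOfPaths, dif_neg fun h => hb h.1, hT.2.2 b hb]

lemma ncard_filter_eq_sum_rowPath (hlk : ∀ i, k < i → lam.part i = 0) (T : Box → ℕ) (n : ℕ) :
    {b ∈ skewCells lam mu | T b = n}.ncard = ∑ j : Fin k, rowPath lam mu T j n := by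
  classical
  have hset : {b ∈ skewCells lam mu | T b = n} = ↑(univ.biUnion fun j : Fin k =>
      {x ∈ Ioc (shiftedPart mu j) (shiftedPart lam j) | T (rowCell j x) = n}.image
        (rowCell j)) := by
    ext b
    simp only [Set.mem_ofPred_eq, mem_coe, mem_biUnion, mem_univ, true_and, mem_image,
      mem_filter]
    constructor
    · rintro ⟨hb, rfl⟩
      obtain ⟨j, x, rfl⟩ := exists_eq_rowCell hb
      exact ⟨⟨j, lt_of_rowCell_mem_skewCells hlk hb⟩, x, ⟨rowCell_mem_skewCells.1 hb, rfl⟩, rfl⟩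
    · rintro ⟨j, x, ⟨hx, hTx⟩, rfl⟩
      exact ⟨rowCell_mem_skewCells.2 hx, hTx⟩
  rw [hset, Set.ncard_coe_finset, card_biUnion]
  · simp [card_image_of_injective _ (rowCell_injective _), rowPath, valueCount_apply]
  · intro i _ j _ hij
    refine disjoint_left.2 fun b hbi hbj => hij ?_
    obtain ⟨x, -, rfl⟩ := mem_image.1 hbi
    obtain ⟨y, -, h⟩ := mem_image.1 hbj
    exact Fin.ext (by simpa [rowCell] using (congrArg Prod.fst h).symm)

open scoped Classical in
theorem ncard_ssyt_eq_card_nonintersecting (hsub : ∀ i, mu.part i ≤ lam.part i)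
    (hlk : ∀ i, k < i → lam.part i = 0) (μ₀ : ℕ →₀ ℕ) :
    {T : Box → ℕ | IsSSYT (skewCells lam mu) T ∧
        ∀ n, μ₀ n = {b ∈ skewCells lam mu | T b = n}.ncard}.ncard =
      #{l ∈ univ.piAntidiag μ₀ |
        EndsAt (fun j : Fin k => shiftedPart mu j) (fun j => shiftedPart lam j) 1 l ∧
          ¬Intersecting (fun j : Fin k => shiftedPart mu j) l} := by
  rw [← Set.ncard_coe_finset]
  refine Set.ncard_congr (fun T _ j => rowPath lam mu T j) ?_ ?_ ?_
  · rintro T ⟨hT, hw⟩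
    simp only [coe_filter, Set.mem_ofPred_eq, mem_piAntidiag]
    refine ⟨⟨?_, by simp⟩, fun j => ?_, not_intersecting_rowPath hsub hT⟩
    · ext n
      rw [Finsupp.finsetSum_apply, hw n, ncard_filter_eq_sum_rowPath hlk]
    · simpa using shiftedPart_add_degree_rowPath hsub T j
  · rintro T T' ⟨hT, -⟩ ⟨hT', -⟩ h
    rw [← tableauOfPaths_rowPath hsub hlk hT, h, tableauOfPaths_rowPath hsub hlk hT']
  · intro l hl
    simp only [coe_filter, Set.mem_ofPred_eq, mem_piAntidiag] at hl
    obtain ⟨⟨hsum, -⟩, hend, hni⟩ := hl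
    refine ⟨tableauOfPaths lam mu l, ⟨isSSYT_tableauOfPaths hlk hend hni, fun n => ?_⟩,
      rowPath_tableauOfPaths hend⟩
    rw [ncard_filter_eq_sum_rowPath hlk, ← hsum, Finsupp.finsetSum_apply]
    exact sum_congr rfl fun j _ => by rw [← congrFun (rowPath_tableauOfPaths hend) j]

end Tableaux

end JacobiTrudi

open JacobiTrudi

theorem jacobi_trudi_general
    (k : ℕ) (lam mu : Partition')
    (hsub : ∀ i : ℕ, mu.part i ≤ lam.part i)
    (hlk : ∀ i : ℕ, k < i → lam.part i = 0) :
    schur (skewCells lam mu) =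
      Matrix.det (Matrix.of fun i j : Fin k =>
        hSym ((lam.part ((i : ℕ) + 1) : ℤ) - (mu.part ((j : ℕ) + 1) : ℤ)
          - ((i : ℕ) + 1 : ℤ) + ((j : ℕ) + 1 : ℤ))) := by
  have hentries : (Matrix.of fun i j : Fin k =>
      hSym ((lam.part ((i : ℕ) + 1) : ℤ) - (mu.part ((j : ℕ) + 1) : ℤ)
        - ((i : ℕ) + 1 : ℤ) + ((j : ℕ) + 1 : ℤ))) =
      Matrix.of fun i j : Fin k => hSym (shiftedPart lam i - shiftedPart mu j) := by
    ext i j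
    simp only [Matrix.of_apply, shiftedPart]
    ring_nf
  ext μ₀
  rw [hentries, coeff_det_hSym,
    sum_sign_mul_card_endsAt (strictAnti_shiftedPart_fin mu k) (strictAnti_shiftedPart_fin lam k),
    ← ncard_ssyt_eq_card_nonintersecting hsub hlk]
  rfl

/-- **Jacobi–Trudi identity.** For partitions `μ ⊆ λ` with at most `k`
parts, `s_{λ/μ} = det( h_{λ_i - μ_j - i + j} )_{1 ≤ i, j ≤ k}`. -/
theorem jacobi_trudi
    (k : ℕ) (lam mu : Partition')
    (hsub : ∀ i : ℕ, mu.part i ≤ lam.part i)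
    (hlk : ∀ i : ℕ, k < i → lam.part i = 0) (hmk : ∀ i : ℕ, k < i → mu.part i = 0) :
    schur (skewCells lam mu) =
      Matrix.det (Matrix.of fun i j : Fin k =>
        hSym ((lam.part ((i : ℕ) + 1) : ℤ) - (mu.part ((j : ℕ) + 1) : ℤ)
          - ((i : ℕ) + 1 : ℤ) + ((j : ℕ) + 1 : ℤ))) :=
  jacobi_trudi_general k lam mu hsub hlk
end
end
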